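/- arXiv:0709.1205 — 3 statements merged into one kernel-verified Lean document; each statement's English description precedes it below -/
import Mathlib

section
/- If an atomic flow A is normal for the flow rewriting system w and A →_c* B, then B is normal for w. -/
set_option linter.unusedVariables false

namespace AF

/-! ### Formulae of system SKS.

Atoms are pairs `(n, b)`; the involution `ā` flips the Boolean, so it is
fixed-point free. -/

inductive Formula : Type
  | tt : Formula
  | ff : Formula
  | atom : ℕ → Bool → Formula
  | or : Formula → Formula → Formula
  | and : Formula → Formula → Formula
  deriving DecidableEq

namespace Formula

/-- Subformula at a position (`false` = left child, `true` = right child). -/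
def sub : Formula → List Bool → Option Formula
  | φ, [] => some φ
  | .or α _, false :: p => sub α p
  | .or _ β, true :: p => sub β p
  | .and α _, false :: p => sub α p
  | .and _ β, true :: p => sub β p
  | _, _ :: _ => none

/-- Replace the subformula at a position. -/
def repl : Formula → List Bool → Formula → Formula
  | _, [], ψ => ψ
  | .or α β, false :: p, ψ => .or (repl α p ψ) β
  | .or α β, true :: p, ψ => .or α (repl β p ψ)
  | .and α β, false :: p, ψ => .and (repl α p ψ) β
  | .and α β, true :: p, ψ => .and α (repl β p ψ)
  | φ, _ :: _, _ => φ

/-- `p` is an atom occurrence of `φ`. -/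
def IsOcc (φ : Formula) (p : List Bool) : Prop :=
  ∃ n b, φ.sub p = some (.atom n b)

end Formula

/-! ### Inference rules.

The rule `=` of SKS replaces a formula by an equivalent one under
commutativity, associativity and the unit equations; each single instance of
`=` applies one equation (in either direction), so we list the equations as
individual rule names, all marked as being instances of `=` via `isEq`. -/

inductive RuleName : Type
  | aiDown | aiUp | awDown | awUp | acDown | acUp
  | s | m
  | eqOrComm | eqAndComm
  | eqOrAssocL | eqOrAssocR | eqAndAssocL | eqAndAssocR
  | eqOrUnitDel | eqOrUnitAdd | eqAndUnitDel | eqAndUnitAdd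
  | eqTTDel | eqTTAdd | eqFFDel | eqFFAdd
  deriving DecidableEq

namespace RuleName

/-- The atomic structural rules. -/
def isStructural : RuleName → Bool
  | .aiDown | .aiUp | .awDown | .awUp | .acDown | .acUp => true
  | _ => false

/-- The rule names that are instances of the rule `=`. -/
def isEq : RuleName → Bool
  | .aiDown | .aiUp | .awDown | .awUp | .acDown | .acUp | .s | .m => false
  | _ => true

end RuleName

/-- Rule instances (redex ⟹ contractum). -/
inductive RuleInstance : RuleName → Formula → Formula → Prop
  | aiDown (n : ℕ) (b : Bool) :
      RuleInstance .aiDown .tt (.or (.atom n b) (.atom n (!b)))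
  | aiUp (n : ℕ) (b : Bool) :
      RuleInstance .aiUp (.and (.atom n b) (.atom n (!b))) .ff
  | awDown (n : ℕ) (b : Bool) : RuleInstance .awDown .ff (.atom n b)
  | awUp (n : ℕ) (b : Bool) : RuleInstance .awUp (.atom n b) .tt
  | acDown (n : ℕ) (b : Bool) :
      RuleInstance .acDown (.or (.atom n b) (.atom n b)) (.atom n b)
  | acUp (n : ℕ) (b : Bool) :
      RuleInstance .acUp (.atom n b) (.and (.atom n b) (.atom n b))
  | s (α β γ : Formula) :
      RuleInstance .s (.and α (.or β γ)) (.or (.and α β) γ)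
  | m (α β γ δ : Formula) :
      RuleInstance .m (.or (.and α β) (.and γ δ)) (.and (.or α γ) (.or β δ))
  | eqOrComm (α β : Formula) : RuleInstance .eqOrComm (.or α β) (.or β α)
  | eqAndComm (α β : Formula) : RuleInstance .eqAndComm (.and α β) (.and β α)
  | eqOrAssocL (α β γ : Formula) :
      RuleInstance .eqOrAssocL (.or (.or α β) γ) (.or α (.or β γ))
  | eqOrAssocR (α β γ : Formula) :
      RuleInstance .eqOrAssocR (.or α (.or β γ)) (.or (.or α β) γ)
  | eqAndAssocL (α β γ : Formula) :
      RuleInstance .eqAndAssocL (.and (.and α β) γ) (.and α (.and β γ))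
  | eqAndAssocR (α β γ : Formula) :
      RuleInstance .eqAndAssocR (.and α (.and β γ)) (.and (.and α β) γ)
  | eqOrUnitDel (α : Formula) : RuleInstance .eqOrUnitDel (.or α .ff) α
  | eqOrUnitAdd (α : Formula) : RuleInstance .eqOrUnitAdd α (.or α .ff)
  | eqAndUnitDel (α : Formula) : RuleInstance .eqAndUnitDel (.and α .tt) α
  | eqAndUnitAdd (α : Formula) : RuleInstance .eqAndUnitAdd α (.and α .tt)
  | eqTTDel : RuleInstance .eqTTDel (.or .tt .tt) .tt
  | eqTTAdd : RuleInstance .eqTTAdd .tt (.or .tt .tt)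
  | eqFFDel : RuleInstance .eqFFDel (.and .ff .ff) .ff
  | eqFFAdd : RuleInstance .eqFFAdd .ff (.and .ff .ff)

/-- One (deep) inference step applying rule `r` at position `q`. -/
def StepAt (r : RuleName) (q : List Bool) (φ ψ : Formula) : Prop :=
  ∃ γ δ, φ.sub q = some γ ∧ RuleInstance r γ δ ∧ ψ = φ.repl q δ

/-- One inference step using a rule from the set `S`. -/
def Step (S : Set RuleName) (φ ψ : Formula) : Prop :=
  ∃ r ∈ S, ∃ q, StepAt r q φ ψ

/-- There is a derivation from `φ` to `ψ` using only rules from `S`. -/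
def Derives (S : Set RuleName) : Formula → Formula → Prop :=
  Relation.ReflTransGen (Step S)

/-! ### Derivations as explicit data (for the theory of atomic flows). -/

/-- A derivation: a premiss and a chain of steps, each recorded by its rule
name, the position of the redex, and the resulting formula. -/
structure Deriv : Type where
  prem : Formula
  steps : List (RuleName × List Bool × Formula)

namespace Deriv

/-- The `i`-th step datum. -/
def stepAt (Φ : Deriv) (i : ℕ) : RuleName × List Bool × Formula :=
  Φ.steps.getD i (RuleName.s, ([] : List Bool), Formula.tt)

/-- The `i`-th formula of the derivation (`0` is the premiss). -/
def fml (Φ : Deriv) (i : ℕ) : Formula :=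
  (Φ.prem :: Φ.steps.map (fun t => t.2.2)).getD i Φ.prem

/-- Number of formulae in the derivation. -/
def nf (Φ : Deriv) : ℕ := Φ.steps.length + 1

/-- The conclusion of the derivation. -/
def concl (Φ : Deriv) : Formula := Φ.fml Φ.steps.length

/-- The derivation is well formed: every recorded step is a correct
inference step of SKS. -/
def WF (Φ : Deriv) : Prop :=
  ∀ i, i < Φ.steps.length →
    StepAt (Φ.stepAt i).1 (Φ.stepAt i).2.1 (Φ.fml i) (Φ.fml (i + 1))

end Deriv

/-! ### Atomic flows. -/

inductive FlowLabel : Type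
  | aiDown | aiUp | awDown | awUp | acDown | acUp
  deriving DecidableEq

/-- Required (number of lower edges, number of upper edges) of a vertex. -/
def labDeg : FlowLabel → ℕ × ℕ
  | .aiDown => (2, 0)
  | .aiUp => (0, 2)
  | .awDown => (1, 0)
  | .awUp => (0, 1)
  | .acDown => (1, 2)
  | .acUp => (2, 1)

/-- The data of an atomic flow: vertices, edges, labels, and the two
endpoint maps.  `up e = none` means the upper endpoint is `⊤`, and
`lo e = none` means the lower endpoint is `⊥`. -/
structure PreFlow : Type where
  V : Finset ℕ
  E : Finset ℕ
  η : ℕ → FlowLabel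
  up : ℕ → Option ℕ
  lo : ℕ → Option ℕ

namespace PreFlow

/-- Lower edges of a vertex. -/
def Ledges (F : PreFlow) (v : ℕ) : Finset ℕ :=
  F.E.filter (fun e => F.up e = some v)

/-- Upper edges of a vertex. -/
def Uedges (F : PreFlow) (v : ℕ) : Finset ℕ :=
  F.E.filter (fun e => F.lo e = some v)

/-- All edges of a vertex. -/
def edges (F : PreFlow) (v : ℕ) : Finset ℕ := F.Ledges v ∪ F.Uedges v

def degOK (F : PreFlow) : Prop :=
  ∀ v ∈ F.V, (F.Ledges v).card = (labDeg (F.η v)).1 ∧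
    (F.Uedges v).card = (labDeg (F.η v)).2

def endpointsOK (F : PreFlow) : Prop :=
  ∀ e ∈ F.E, (∀ v, F.up e = some v → v ∈ F.V) ∧
    (∀ v, F.lo e = some v → v ∈ F.V)

/-- No cyclic sequence of edges `ε₁, …, ε_h` with
`up (ε_i) = lo (ε_(i+1 mod h))`. -/
def Acyclic (F : PreFlow) : Prop :=
  ¬ ∃ (h : ℕ) (ε : Fin (h + 1) → ℕ), (∀ i, ε i ∈ F.E) ∧
      ∀ i : Fin (h + 1), (F.up (ε i)).isSome ∧ F.up (ε i) = F.lo (ε (i + 1))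

/-- `π` is a polarity assignment (`false` = `−`, `true` = `+`). -/
def PolarityOK (F : PreFlow) (π : ℕ → Bool) : Prop :=
  ∀ v ∈ F.V,
    ((F.η v = .acDown ∨ F.η v = .acUp) →
      ∀ e₁ ∈ F.edges v, ∀ e₂ ∈ F.edges v, π e₁ = π e₂) ∧
    ((F.η v = .aiDown ∨ F.η v = .aiUp) →
      ∃ e₁ ∈ F.edges v, ∃ e₂ ∈ F.edges v, π e₁ ≠ π e₂)

/-- `F` is an atomic flow. -/
def IsFlow (F : PreFlow) : Prop :=
  F.degOK ∧ F.endpointsOK ∧ F.Acyclic ∧ ∃ π, F.PolarityOK π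

end PreFlow

/-! ### Paths, ai-paths, cycles. -/

/-- An endpoint of a path: a vertex, or `⊤`, or `⊥`. -/
inductive VPt : Type
  | ver : ℕ → VPt
  | top : VPt
  | bot : VPt
  deriving DecidableEq

/-- The upper endpoint of edge `e` is `ν`. -/
def srcOK (F : PreFlow) (ν : VPt) (e : ℕ) : Prop :=
  match ν with
  | .ver v => F.up e = some v
  | .top => F.up e = none
  | .bot => False

/-- The lower endpoint of edge `e` is `ν`. -/
def tgtOK (F : PreFlow) (ν : VPt) (e : ℕ) : Prop :=
  match ν with
  | .ver v => F.lo e = some v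
  | .bot => F.lo e = none
  | .top => False

/-- A downward path from `ν` to `ν'` (a nonempty sequence of edges, each
hanging from the lower endpoint of the previous one). -/
def IsDownPath (F : PreFlow) (ν ν' : VPt) (l : List ℕ) : Prop :=
  l ≠ [] ∧ (∀ e ∈ l, e ∈ F.E) ∧
  (∀ i, i + 1 < l.length →
    ∃ v ∈ F.V, F.lo (l.getD i 0) = some v ∧ F.up (l.getD (i + 1) 0) = some v) ∧
  srcOK F ν (l.getD 0 0) ∧ tgtOK F ν' (l.getD (l.length - 1) 0)

/-- A path from `ν` to `ν'`: a downward path, or the reverse of a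
downward path from `ν'` to `ν`. -/
def IsPath (F : PreFlow) (ν ν' : VPt) (l : List ℕ) : Prop :=
  IsDownPath F ν ν' l ∨ IsDownPath F ν' ν l.reverse

/-- ai-paths: paths, closed under concatenation (in distinct edges) at
interaction and cointeraction vertices. -/
inductive AIPath (F : PreFlow) : VPt → VPt → List ℕ → Prop
  | single {ν ν' : VPt} {l : List ℕ} : IsPath F ν ν' l → AIPath F ν ν' l
  | join {ν ν' : VPt} {v : ℕ} {l₁ l₂ : List ℕ} {e e' : ℕ} :
      v ∈ F.V → (F.η v = .aiDown ∨ F.η v = .aiUp) →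
      AIPath F ν (.ver v) (l₁ ++ [e]) →
      AIPath F (.ver v) ν' (e' :: l₂) →
      e ≠ e' →
      AIPath F ν ν' (l₁ ++ [e] ++ e' :: l₂)

/-- The flow contains an ai-cycle: an ai-path from a vertex to itself in
which no edge appears twice. -/
def HasAICycle (F : PreFlow) : Prop :=
  ∃ v l, v ∈ F.V ∧ AIPath F (.ver v) (.ver v) l ∧ l.Nodup

def CycleFree (F : PreFlow) : Prop := ¬ HasAICycle F

/-- An ai-connection: a path from an interaction vertex to a cointeraction
vertex or vice versa. -/
def IsConnection (F : PreFlow) (l : List ℕ) : Prop :=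
  ∃ v v', v ∈ F.V ∧ v' ∈ F.V ∧
    ((F.η v = .aiDown ∧ F.η v' = .aiUp) ∨
     (F.η v = .aiUp ∧ F.η v' = .aiDown)) ∧
    IsPath F (.ver v) (.ver v') l

/-- A simple edge: an ai-connection consisting of a single edge. -/
def SimpleEdge (F : PreFlow) (e : ℕ) : Prop := IsConnection F [e]

/-- A clean path: an ai-path all of whose ai-connections are simple edges. -/
def IsCleanPath (F : PreFlow) (ν ν' : VPt) (l : List ℕ) : Prop :=
  AIPath F ν ν' l ∧
  ∀ l₁ l₂ l₃, l = l₁ ++ l₂ ++ l₃ → IsConnection F l₂ → l₂.length = 1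

/-! ### Local flow reduction rules. -/

open PreFlow

/-- Rule `w↓-c↓`: a weakening feeding a contraction is erased, merging the
contraction's other two edges. -/
def RedWdCd (A B : PreFlow) : Prop :=
  ∃ v₁ v₂ e e₂ e₃,
    v₁ ∈ A.V ∧ v₂ ∈ A.V ∧ v₁ ≠ v₂ ∧
    A.η v₁ = .awDown ∧ A.η v₂ = .acDown ∧
    e ∈ A.E ∧ e₂ ∈ A.E ∧ e₃ ∈ A.E ∧ e ≠ e₂ ∧ e ≠ e₃ ∧ e₂ ≠ e₃ ∧
    A.up e = some v₁ ∧ A.lo e = some v₂ ∧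
    A.lo e₂ = some v₂ ∧ A.up e₃ = some v₂ ∧
    B.V = (A.V.erase v₁).erase v₂ ∧
    B.E = (A.E.erase e).erase e₃ ∧
    B.η = A.η ∧ B.up = A.up ∧
    B.lo = Function.update A.lo e₂ (A.lo e₃)

/-- Rule `c↑-w↑` (dual of `w↓-c↓`). -/
def RedCuWu (A B : PreFlow) : Prop :=
  ∃ v₁ v₂ e e₂ e₃,
    v₁ ∈ A.V ∧ v₂ ∈ A.V ∧ v₁ ≠ v₂ ∧
    A.η v₁ = .awUp ∧ A.η v₂ = .acUp ∧
    e ∈ A.E ∧ e₂ ∈ A.E ∧ e₃ ∈ A.E ∧ e ≠ e₂ ∧ e ≠ e₃ ∧ e₂ ≠ e₃ ∧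
    A.lo e = some v₁ ∧ A.up e = some v₂ ∧
    A.up e₂ = some v₂ ∧ A.lo e₃ = some v₂ ∧
    B.V = (A.V.erase v₁).erase v₂ ∧
    B.E = (A.E.erase e).erase e₃ ∧
    B.η = A.η ∧ B.lo = A.lo ∧
    B.up = Function.update A.up e₂ (A.up e₃)

/-- Rule `w↓-i↑`: a weakening feeding a cointeraction is replaced by a
coweakening on the other cointeraction edge. -/
def RedWdIu (A B : PreFlow) : Prop :=
  ∃ v₁ v₂ e e₂,
    v₁ ∈ A.V ∧ v₂ ∈ A.V ∧ v₁ ≠ v₂ ∧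
    A.η v₁ = .awDown ∧ A.η v₂ = .aiUp ∧
    e ∈ A.E ∧ e₂ ∈ A.E ∧ e ≠ e₂ ∧
    A.up e = some v₁ ∧ A.lo e = some v₂ ∧ A.lo e₂ = some v₂ ∧
    B.V = A.V.erase v₁ ∧ B.E = A.E.erase e ∧
    B.η = Function.update A.η v₂ .awUp ∧
    B.up = A.up ∧ B.lo = A.lo

/-- Rule `i↓-w↑` (dual of `w↓-i↑`). -/
def RedIdWu (A B : PreFlow) : Prop :=
  ∃ v₁ v₂ e e₂,
    v₁ ∈ A.V ∧ v₂ ∈ A.V ∧ v₁ ≠ v₂ ∧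
    A.η v₁ = .awUp ∧ A.η v₂ = .aiDown ∧
    e ∈ A.E ∧ e₂ ∈ A.E ∧ e ≠ e₂ ∧
    A.lo e = some v₁ ∧ A.up e = some v₂ ∧ A.up e₂ = some v₂ ∧
    B.V = A.V.erase v₁ ∧ B.E = A.E.erase e ∧
    B.η = Function.update A.η v₂ .awDown ∧
    B.up = A.up ∧ B.lo = A.lo

/-- Rule `w↓-w↑`: a weakening joined to a coweakening is erased. -/
def RedWdWu (A B : PreFlow) : Prop :=
  ∃ v₁ v₂ e,
    v₁ ∈ A.V ∧ v₂ ∈ A.V ∧ v₁ ≠ v₂ ∧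
    A.η v₁ = .awDown ∧ A.η v₂ = .awUp ∧
    e ∈ A.E ∧ A.up e = some v₁ ∧ A.lo e = some v₂ ∧
    B.V = (A.V.erase v₁).erase v₂ ∧ B.E = A.E.erase e ∧
    B.η = A.η ∧ B.up = A.up ∧ B.lo = A.lo

/-- Rule `w↓-c↑`: a weakening feeding a cocontraction is replaced by two
weakenings. -/
def RedWdCu (A B : PreFlow) : Prop :=
  ∃ v₁ v₂ e e₁ e₂,
    v₁ ∈ A.V ∧ v₂ ∈ A.V ∧ v₁ ≠ v₂ ∧
    A.η v₁ = .awDown ∧ A.η v₂ = .acUp ∧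
    e ∈ A.E ∧ e₁ ∈ A.E ∧ e₂ ∈ A.E ∧ e ≠ e₁ ∧ e ≠ e₂ ∧ e₁ ≠ e₂ ∧
    A.up e = some v₁ ∧ A.lo e = some v₂ ∧
    A.up e₁ = some v₂ ∧ A.up e₂ = some v₂ ∧
    B.V = A.V ∧ B.E = A.E.erase e ∧
    B.η = Function.update A.η v₂ .awDown ∧
    B.up = Function.update A.up e₁ (some v₁) ∧
    B.lo = A.lo

/-- Rule `c↓-w↑` (dual of `w↓-c↑`). -/
def RedCdWu (A B : PreFlow) : Prop :=
  ∃ v₁ v₂ e e₁ e₂,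
    v₁ ∈ A.V ∧ v₂ ∈ A.V ∧ v₁ ≠ v₂ ∧
    A.η v₁ = .awUp ∧ A.η v₂ = .acDown ∧
    e ∈ A.E ∧ e₁ ∈ A.E ∧ e₂ ∈ A.E ∧ e ≠ e₁ ∧ e ≠ e₂ ∧ e₁ ≠ e₂ ∧
    A.lo e = some v₁ ∧ A.up e = some v₂ ∧
    A.lo e₁ = some v₂ ∧ A.lo e₂ = some v₂ ∧
    B.V = A.V ∧ B.E = A.E.erase e ∧
    B.η = Function.update A.η v₂ .awUp ∧
    B.lo = Function.update A.lo e₁ (some v₁) ∧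
    B.up = A.up

/-- Rule `c↓-i↑`: a contraction whose output edge enters a cointeraction is
replaced by a cocontraction on the other cointeraction edge followed by two
cointeractions. -/
def RedCdIu (A B : PreFlow) : Prop :=
  ∃ v₁ v₂ v₃ e e₁ e₂ e₃ g₁ g₂,
    v₁ ∈ A.V ∧ v₂ ∈ A.V ∧ v₁ ≠ v₂ ∧ v₃ ∉ A.V ∧
    A.η v₁ = .acDown ∧ A.η v₂ = .aiUp ∧
    e ∈ A.E ∧ e₁ ∈ A.E ∧ e₂ ∈ A.E ∧ e₃ ∈ A.E ∧
    e ≠ e₁ ∧ e ≠ e₂ ∧ e ≠ e₃ ∧ e₁ ≠ e₂ ∧ e₁ ≠ e₃ ∧ e₂ ≠ e₃ ∧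
    g₁ ∉ A.E ∧ g₂ ∉ A.E ∧ g₁ ≠ g₂ ∧
    A.lo e₁ = some v₁ ∧ A.lo e₂ = some v₁ ∧
    A.up e = some v₁ ∧ A.lo e = some v₂ ∧ A.lo e₃ = some v₂ ∧
    B.V = insert v₃ A.V ∧
    B.E = insert g₁ (insert g₂ (A.E.erase e)) ∧
    B.η = Function.update (Function.update A.η v₁ .acUp) v₃ .aiUp ∧
    B.up = Function.update (Function.update A.up g₁ (some v₁)) g₂ (some v₁) ∧
    B.lo = Function.update (Function.update (Function.update
      (Function.update (Function.update A.lo e₁ (some v₂)) e₂ (some v₃))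
        e₃ (some v₁)) g₁ (some v₂)) g₂ (some v₃)

/-- Rule `i↓-c↑` (dual of `c↓-i↑`). -/
def RedIdCu (A B : PreFlow) : Prop :=
  ∃ v₁ v₂ v₃ e e₁ e₂ e₃ g₁ g₂,
    v₁ ∈ A.V ∧ v₂ ∈ A.V ∧ v₁ ≠ v₂ ∧ v₃ ∉ A.V ∧
    A.η v₁ = .acUp ∧ A.η v₂ = .aiDown ∧
    e ∈ A.E ∧ e₁ ∈ A.E ∧ e₂ ∈ A.E ∧ e₃ ∈ A.E ∧
    e ≠ e₁ ∧ e ≠ e₂ ∧ e ≠ e₃ ∧ e₁ ≠ e₂ ∧ e₁ ≠ e₃ ∧ e₂ ≠ e₃ ∧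
    g₁ ∉ A.E ∧ g₂ ∉ A.E ∧ g₁ ≠ g₂ ∧
    A.up e₁ = some v₁ ∧ A.up e₂ = some v₁ ∧
    A.lo e = some v₁ ∧ A.up e = some v₂ ∧ A.up e₃ = some v₂ ∧
    B.V = insert v₃ A.V ∧
    B.E = insert g₁ (insert g₂ (A.E.erase e)) ∧
    B.η = Function.update (Function.update A.η v₁ .acDown) v₃ .aiDown ∧
    B.lo = Function.update (Function.update A.lo g₁ (some v₁)) g₂ (some v₁) ∧
    B.up = Function.update (Function.update (Function.update
      (Function.update (Function.update A.up e₁ (some v₂)) e₂ (some v₃))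
        e₃ (some v₁)) g₁ (some v₂)) g₂ (some v₃)

/-- Rule `c↓-c↑`: a contraction whose output enters a cocontraction is
replaced by two cocontractions above two contractions, crosswise connected. -/
def RedCdCu (A B : PreFlow) : Prop :=
  ∃ v₁ v₂ v₃ v₄ e e₁ e₂ e₃ e₄ g₁₁ g₁₂ g₂₁ g₂₂,
    v₁ ∈ A.V ∧ v₂ ∈ A.V ∧ v₁ ≠ v₂ ∧
    v₃ ∉ A.V ∧ v₄ ∉ A.V ∧ v₃ ≠ v₄ ∧
    A.η v₁ = .acDown ∧ A.η v₂ = .acUp ∧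
    e ∈ A.E ∧ e₁ ∈ A.E ∧ e₂ ∈ A.E ∧ e₃ ∈ A.E ∧ e₄ ∈ A.E ∧
    e ≠ e₁ ∧ e ≠ e₂ ∧ e ≠ e₃ ∧ e ≠ e₄ ∧
    e₁ ≠ e₂ ∧ e₁ ≠ e₃ ∧ e₁ ≠ e₄ ∧ e₂ ≠ e₃ ∧ e₂ ≠ e₄ ∧ e₃ ≠ e₄ ∧
    g₁₁ ∉ A.E ∧ g₁₂ ∉ A.E ∧ g₂₁ ∉ A.E ∧ g₂₂ ∉ A.E ∧
    g₁₁ ≠ g₁₂ ∧ g₁₁ ≠ g₂₁ ∧ g₁₁ ≠ g₂₂ ∧ g₁₂ ≠ g₂₁ ∧ g₁₂ ≠ g₂₂ ∧ g₂₁ ≠ g₂₂ ∧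
    A.lo e₁ = some v₁ ∧ A.lo e₂ = some v₁ ∧ A.up e = some v₁ ∧
    A.lo e = some v₂ ∧ A.up e₃ = some v₂ ∧ A.up e₄ = some v₂ ∧
    B.V = insert v₃ (insert v₄ A.V) ∧
    B.E = insert g₁₁ (insert g₁₂ (insert g₂₁ (insert g₂₂ (A.E.erase e)))) ∧
    B.η = Function.update (Function.update (Function.update
      (Function.update A.η v₁ .acUp) v₂ .acUp) v₃ .acDown) v₄ .acDown ∧
    B.up = Function.update (Function.update (Function.update
      (Function.update (Function.update (Function.update A.up
        e₃ (some v₃)) e₄ (some v₄)) g₁₁ (some v₁)) g₁₂ (some v₁))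
          g₂₁ (some v₂)) g₂₂ (some v₂) ∧
    B.lo = Function.update (Function.update (Function.update
      (Function.update (Function.update A.lo e₂ (some v₂)) g₁₁ (some v₃))
        g₁₂ (some v₄)) g₂₁ (some v₃)) g₂₂ (some v₄)

/-- One step of the flow rewriting system `w`. -/
def StepW (A B : PreFlow) : Prop :=
  RedWdCd A B ∨ RedCuWu A B ∨ RedWdIu A B ∨ RedIdWu A B ∨
  RedWdWu A B ∨ RedWdCu A B ∨ RedCdWu A B

/-- One step of the flow rewriting system `c`. -/
def StepC (A B : PreFlow) : Prop :=
  RedCdIu A B ∨ RedIdCu A B ∨ RedCdCu A B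

/-- `A` is normal for the flow rewriting system `w`. -/
def NormalW (A : PreFlow) : Prop := ¬ ∃ B, StepW A B

/-- `A` is normal for the flow rewriting system `c`. -/
def NormalC (A : PreFlow) : Prop := ¬ ∃ B, StepC A B

/-! ### Flow isomorphisms. -/

structure FlowIso (A B : PreFlow) : Type where
  vmap : ℕ → ℕ
  emap : ℕ → ℕ
  vbij : Set.BijOn vmap (A.V : Set ℕ) (B.V : Set ℕ)
  ebij : Set.BijOn emap (A.E : Set ℕ) (B.E : Set ℕ)
  lab : ∀ v ∈ A.V, B.η (vmap v) = A.η v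
  upc : ∀ e ∈ A.E, B.up (emap e) = (A.up e).map vmap
  loc : ∀ e ∈ A.E, B.lo (emap e) = (A.lo e).map vmap

/-! ### The global reduction `→se` (elimination of a simple edge). -/

/-- The flow obtained from `B` by eliminating the simple edge `e0` between
the interaction `vi` and the cointeraction `vc` (with `e2` the other lower
edge of `vi` and `e3` the other upper edge of `vc`): two copies (tags `0`,
hat, the lower one, and `1`, tilde, the upper one) of the remaining flow are
glued by identifying the hat copy of `e2` with the tilde copy of `e3`; a
weakening (vertex `(2,0)`) is placed above the tilde copy of `e2`, a
coweakening (vertex `(2,1)`) below the hat copy of `e3`; each upper edge `ε`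
of `B` gives a cocontraction (vertex `(3,ε)`, with a new upper edge `(3,ε)`)
joining the two copies of `ε`, and dually each lower edge `ε'` of `B` gives
a contraction (vertex `(4,ε')`, with a new lower edge `(4,ε')`). -/
def seFlow (B : PreFlow) (vi vc e0 e2 e3 : ℕ) : PreFlow :=
  { V := ((B.V.erase vi).erase vc).image (Nat.pair 0) ∪
         ((B.V.erase vi).erase vc).image (Nat.pair 1) ∪
         {Nat.pair 2 0, Nat.pair 2 1} ∪
         (B.E.filter (fun e => B.up e = none)).image (Nat.pair 3) ∪
         (B.E.filter (fun e => B.lo e = none)).image (Nat.pair 4),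
    E := (B.E.erase e0).image (Nat.pair 0) ∪
         (B.E.erase e0).image (fun e => if e = e3 then Nat.pair 0 e2 else Nat.pair 1 e) ∪
         (B.E.filter (fun e => B.up e = none)).image (Nat.pair 3) ∪
         (B.E.filter (fun e => B.lo e = none)).image (Nat.pair 4),
    η := fun x =>
      if (Nat.unpair x).1 = 2 then
        (if (Nat.unpair x).2 = 0 then FlowLabel.awDown else FlowLabel.awUp)
      else if (Nat.unpair x).1 = 3 then FlowLabel.acUp
      else if (Nat.unpair x).1 = 4 then FlowLabel.acDown
      else B.η (Nat.unpair x).2,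
    up := fun x =>
      let t := (Nat.unpair x).1
      let y := (Nat.unpair x).2
      if t = 0 then
        (if y = e2 then
          (match B.up e3 with
           | some v => some (Nat.pair 1 v)
           | none => some (Nat.pair 3 e3))
        else
          (match B.up y with
           | some v => some (Nat.pair 0 v)
           | none => some (Nat.pair 3 y)))
      else if t = 1 then
        (if y = e2 then some (Nat.pair 2 0)
        else
          (match B.up y with
           | some v => some (Nat.pair 1 v)
           | none => some (Nat.pair 3 y)))
      else if t = 3 then none
      else some (Nat.pair 4 y),
    lo := fun x =>
      let t := (Nat.unpair x).1
      let y := (Nat.unpair x).2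
      if t = 0 then
        (if y = e2 then
          (match B.lo e2 with
           | some v => some (Nat.pair 0 v)
           | none => some (Nat.pair 4 e2))
        else if y = e3 then some (Nat.pair 2 1)
        else
          (match B.lo y with
           | some v => some (Nat.pair 0 v)
           | none => some (Nat.pair 4 y)))
      else if t = 1 then
        (match B.lo y with
         | some v => some (Nat.pair 1 v)
         | none => some (Nat.pair 4 y))
      else if t = 3 then some (Nat.pair 3 y)
      else none }

/-- The reduction `→se`: elimination of a simple edge (up to flow
isomorphism). -/
def RedSE (B C : PreFlow) : Prop :=
  ∃ vi vc e0 e2 e3,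
    vi ∈ B.V ∧ vc ∈ B.V ∧ vi ≠ vc ∧
    B.η vi = .aiDown ∧ B.η vc = .aiUp ∧
    e0 ∈ B.E ∧ e2 ∈ B.E ∧ e3 ∈ B.E ∧
    e0 ≠ e2 ∧ e0 ≠ e3 ∧ e2 ≠ e3 ∧
    B.up e0 = some vi ∧ B.lo e0 = some vc ∧
    B.up e2 = some vi ∧ B.lo e3 = some vc ∧
    Nonempty (FlowIso C (seFlow B vi vc e0 e2 e3))

/-! ### The atomic flow associated with a derivation. -/

/-- Correspondence conditions for a linear rule applied at position `q`:
for each pair `(c₁, c₂)` in `cs`, occurrences at `q ++ c₁ ++ p` in the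
conclusion (formula `i+1`) are traced to occurrences at `q ++ c₂ ++ p` in
the premiss (formula `i`). -/
def corrCond (f : ℕ → List Bool → ℕ) (i : ℕ) (q : List Bool) (ψ : Formula)
    (cs : List (List Bool × List Bool)) : Prop :=
  ∀ c ∈ cs, ∀ p : List Bool, ψ.IsOcc (q ++ c.1 ++ p) →
    f (i + 1) (q ++ c.1 ++ p) = f i (q ++ c.2 ++ p)

/-- The tracing conditions for one inference step: occurrences in the
context are traced to the same edge, and the active occurrences of a
structural rule are related to the edges of the vertex `v` as prescribed by
its label, while the active occurrences of logical and `=` steps are traced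
to the same edges under the canonical correspondence. -/
def stepCond (A : PreFlow) (f : ℕ → List Bool → ℕ) (v : ℕ) (i : ℕ)
    (r : RuleName) (q : List Bool) (φ ψ : Formula) : Prop :=
  (∀ p, ¬ (q <+: p) → φ.IsOcc p → f (i + 1) p = f i p) ∧
  match r with
  | .aiDown =>
      A.η v = .aiDown ∧
      A.up (f (i + 1) (q ++ [false])) = some v ∧
      A.up (f (i + 1) (q ++ [true])) = some v ∧
      f (i + 1) (q ++ [false]) ≠ f (i + 1) (q ++ [true])
  | .aiUp =>
      A.η v = .aiUp ∧
      A.lo (f i (q ++ [false])) = some v ∧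
      A.lo (f i (q ++ [true])) = some v ∧
      f i (q ++ [false]) ≠ f i (q ++ [true])
  | .awDown => A.η v = .awDown ∧ A.up (f (i + 1) q) = some v
  | .awUp => A.η v = .awUp ∧ A.lo (f i q) = some v
  | .acDown =>
      A.η v = .acDown ∧
      A.lo (f i (q ++ [false])) = some v ∧
      A.lo (f i (q ++ [true])) = some v ∧
      A.up (f (i + 1) q) = some v ∧
      f i (q ++ [false]) ≠ f i (q ++ [true])
  | .acUp =>
      A.η v = .acUp ∧
      A.lo (f i q) = some v ∧
      A.up (f (i + 1) (q ++ [false])) = some v ∧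
      A.up (f (i + 1) (q ++ [true])) = some v ∧
      f (i + 1) (q ++ [false]) ≠ f (i + 1) (q ++ [true])
  | .s => corrCond f i q ψ
      [([false, false], [false]), ([false, true], [true, false]),
       ([true], [true, true])]
  | .m => corrCond f i q ψ
      [([false, false], [false, false]), ([true, false], [false, true]),
       ([false, true], [true, false]), ([true, true], [true, true])]
  | .eqOrComm => corrCond f i q ψ [([false], [true]), ([true], [false])]
  | .eqAndComm => corrCond f i q ψ [([false], [true]), ([true], [false])]
  | .eqOrAssocL => corrCond f i q ψ
      [([false], [false, false]), ([true, false], [false, true]),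
       ([true, true], [true])]
  | .eqOrAssocR => corrCond f i q ψ
      [([false, false], [false]), ([false, true], [true, false]),
       ([true], [true, true])]
  | .eqAndAssocL => corrCond f i q ψ
      [([false], [false, false]), ([true, false], [false, true]),
       ([true, true], [true])]
  | .eqAndAssocR => corrCond f i q ψ
      [([false, false], [false]), ([false, true], [true, false]),
       ([true], [true, true])]
  | .eqOrUnitDel => corrCond f i q ψ [([], [false])]
  | .eqOrUnitAdd => corrCond f i q ψ [([false], [])]
  | .eqAndUnitDel => corrCond f i q ψ [([], [false])]
  | .eqAndUnitAdd => corrCond f i q ψ [([false], [])]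
  | .eqTTDel => True
  | .eqTTAdd => True
  | .eqFFDel => True
  | .eqFFAdd => True

/-- `A` is the atomic flow associated with the derivation `Φ`, where `f`
maps each atom occurrence (formula index, position) of `Φ` to an edge of
`A`, and `g` assigns to each structural inference step its vertex. -/
def IsAssocFlow (Φ : Deriv) (A : PreFlow) (f : ℕ → List Bool → ℕ)
    (g : ℕ → ℕ) : Prop :=
  Φ.WF ∧ A.IsFlow ∧
  (∀ i p, i < Φ.nf → (Φ.fml i).IsOcc p → f i p ∈ A.E) ∧
  (∀ e ∈ A.E, ∃ i p, i < Φ.nf ∧ (Φ.fml i).IsOcc p ∧ f i p = e) ∧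
  (∀ i p p', i < Φ.nf → (Φ.fml i).IsOcc p → (Φ.fml i).IsOcc p' →
    f i p = f i p' → p = p') ∧
  (∀ p, (Φ.fml 0).IsOcc p → A.up (f 0 p) = none) ∧
  (∀ p, (Φ.fml Φ.steps.length).IsOcc p → A.lo (f Φ.steps.length p) = none) ∧
  (∀ i, i < Φ.steps.length → (Φ.stepAt i).1.isStructural = true → g i ∈ A.V) ∧
  (∀ v ∈ A.V, ∃ i, i < Φ.steps.length ∧
    (Φ.stepAt i).1.isStructural = true ∧ g i = v) ∧
  (∀ i j, i < Φ.steps.length → j < Φ.steps.length →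
    (Φ.stepAt i).1.isStructural = true → (Φ.stepAt j).1.isStructural = true →
    g i = g j → i = j) ∧
  (∀ i, i < Φ.steps.length →
    stepCond A f (g i) i (Φ.stepAt i).1 (Φ.stepAt i).2.1
      (Φ.fml i) (Φ.fml (i + 1)))

/-! ### Streamlining. -/

/-- No path from an interaction or weakening vertex to a cointeraction or
coweakening vertex. -/
def NoIWPath (A : PreFlow) : Prop :=
  ¬ ∃ v v' l, v ∈ A.V ∧ v' ∈ A.V ∧
      (A.η v = .aiDown ∨ A.η v = .awDown) ∧
      (A.η v' = .aiUp ∨ A.η v' = .awUp) ∧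
      IsPath A (.ver v) (.ver v') l

/-- `Φ` is a streamlined derivation. -/
def Streamlined (Φ : Deriv) : Prop :=
  ∃ A f g, IsAssocFlow Φ A f g ∧ NoIWPath A

/-- `Φ` is a super-streamlined derivation. -/
def SuperStreamlined (Φ : Deriv) : Prop :=
  ∃ A f g, IsAssocFlow Φ A f g ∧ NoIWPath A ∧ NormalW A

/-- `Φ` is a hyper-streamlined derivation. -/
def HyperStreamlined (Φ : Deriv) : Prop :=
  ∃ A f g, IsAssocFlow Φ A f g ∧ NoIWPath A ∧ NormalW A ∧ NormalC A

end AF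

namespace AF

/-- The invariant: every weakening edge has its lower endpoint at `⊥`, and
every coweakening edge has its upper endpoint at `⊤`. -/
def QuietW (A : PreFlow) : Prop :=
  (∀ v ∈ A.V, ∀ e ∈ A.E, A.η v = .awDown → A.up e = some v → A.lo e = none) ∧
  (∀ v ∈ A.V, ∀ e ∈ A.E, A.η v = .awUp → A.lo e = some v → A.up e = none)

lemma no_loop {A : PreFlow} (hac : A.Acyclic) {e v : ℕ} (he : e ∈ A.E)
    (h1 : A.up e = some v) (h2 : A.lo e = some v) : False :=
  hac ⟨0, fun _ => e, fun _ => he, fun _ => ⟨by simp [h1], h1.trans h2.symm⟩⟩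

lemma mem_Uedges {A : PreFlow} {e v : ℕ} :
    e ∈ A.Uedges v ↔ e ∈ A.E ∧ A.lo e = some v := Finset.mem_filter

lemma mem_Ledges {A : PreFlow} {e v : ℕ} :
    e ∈ A.Ledges v ↔ e ∈ A.E ∧ A.up e = some v := Finset.mem_filter

lemma quiet_of_normal {A : PreFlow} (hA : A.IsFlow) (hn : NormalW A) : QuietW A := by
  obtain ⟨hdeg, hend, hac, -⟩ := hA
  constructor
  · intro v₁ hv₁ e he hη hup
    by_contra hne
    obtain ⟨v₂, hlo⟩ := Option.ne_none_iff_exists'.mp hne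
    have hv₂ : v₂ ∈ A.V := (hend e he).2 v₂ hlo
    have heU : e ∈ A.Uedges v₂ := mem_Uedges.mpr ⟨he, hlo⟩
    obtain ⟨hcardL, hcardU⟩ := hdeg v₂ hv₂
    apply hn
    cases hη₂ : A.η v₂
    case aiDown =>
      rw [hη₂] at hcardU
      rw [Finset.card_eq_zero.mp hcardU] at heU
      exact absurd heU (Finset.notMem_empty e)
    case aiUp =>
      rw [hη₂] at hcardU
      obtain ⟨e₂, he₂U, he₂e⟩ :=
        Finset.exists_mem_ne (by rw [hcardU]; decide) e
      obtain ⟨he₂, hlo₂⟩ := mem_Uedges.mp he₂U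
      have h12 : v₁ ≠ v₂ := fun h => by rw [h, hη₂] at hη; cases hη
      exact ⟨⟨A.V.erase v₁, A.E.erase e, Function.update A.η v₂ .awUp, A.up, A.lo⟩,
        Or.inr (Or.inr (Or.inl ⟨v₁, v₂, e, e₂, hv₁, hv₂, h12, hη, hη₂, he, he₂,
          Ne.symm he₂e, hup, hlo, hlo₂, rfl, rfl, rfl, rfl, rfl⟩))⟩
    case awDown =>
      rw [hη₂] at hcardU
      rw [Finset.card_eq_zero.mp hcardU] at heU
      exact absurd heU (Finset.notMem_empty e)
    case awUp =>
      have h12 : v₁ ≠ v₂ := fun h => by rw [h, hη₂] at hη; cases hη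
      exact ⟨⟨(A.V.erase v₁).erase v₂, A.E.erase e, A.η, A.up, A.lo⟩,
        Or.inr (Or.inr (Or.inr (Or.inr (Or.inl ⟨v₁, v₂, e, hv₁, hv₂, h12, hη, hη₂,
          he, hup, hlo, rfl, rfl, rfl, rfl, rfl⟩))))⟩
    case acDown =>
      rw [hη₂] at hcardL hcardU
      obtain ⟨e₂, he₂U, he₂e⟩ :=
        Finset.exists_mem_ne (by rw [hcardU]; decide) e
      obtain ⟨he₂, hlo₂⟩ := mem_Uedges.mp he₂U
      obtain ⟨e₃, he₃L⟩ := Finset.card_pos.mp (by rw [hcardL]; decide)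
      obtain ⟨he₃, hup₃⟩ := mem_Ledges.mp he₃L
      have h12 : v₁ ≠ v₂ := fun h => by rw [h, hη₂] at hη; cases hη
      have hee₃ : e ≠ e₃ := by
        rintro rfl; rw [hup] at hup₃; exact h12 (Option.some_injective _ hup₃)
      have he₂₃ : e₂ ≠ e₃ := by
        rintro rfl; exact no_loop hac he₂ hup₃ hlo₂
      exact ⟨⟨(A.V.erase v₁).erase v₂, (A.E.erase e).erase e₃, A.η, A.up,
          Function.update A.lo e₂ (A.lo e₃)⟩,
        Or.inl ⟨v₁, v₂, e, e₂, e₃, hv₁, hv₂, h12, hη, hη₂, he, he₂, he₃,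
          Ne.symm he₂e, hee₃, he₂₃, hup, hlo, hlo₂, hup₃, rfl, rfl, rfl, rfl, rfl⟩⟩
    case acUp =>
      rw [hη₂] at hcardL
      obtain ⟨e₁, he₁L, e₂, he₂L, h12e⟩ :=
        Finset.one_lt_card.mp (by rw [hcardL]; decide)
      obtain ⟨he₁, hup₁⟩ := mem_Ledges.mp he₁L
      obtain ⟨he₂, hup₂⟩ := mem_Ledges.mp he₂L
      have h12 : v₁ ≠ v₂ := fun h => by rw [h, hη₂] at hη; cases hη
      have hee₁ : e ≠ e₁ := by
        rintro rfl; rw [hup] at hup₁; exact h12 (Option.some_injective _ hup₁)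
      have hee₂ : e ≠ e₂ := by
        rintro rfl; rw [hup] at hup₂; exact h12 (Option.some_injective _ hup₂)
      exact ⟨⟨A.V, A.E.erase e, Function.update A.η v₂ .awDown,
          Function.update A.up e₁ (some v₁), A.lo⟩,
        Or.inr (Or.inr (Or.inr (Or.inr (Or.inr (Or.inl ⟨v₁, v₂, e, e₁, e₂,
          hv₁, hv₂, h12, hη, hη₂, he, he₁, he₂, hee₁, hee₂, h12e,
          hup, hlo, hup₁, hup₂, rfl, rfl, rfl, rfl, rfl⟩)))))⟩
  · intro v₁ hv₁ e he hη hlo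
    by_contra hne
    obtain ⟨v₂, hup⟩ := Option.ne_none_iff_exists'.mp hne
    have hv₂ : v₂ ∈ A.V := (hend e he).1 v₂ hup
    have heL : e ∈ A.Ledges v₂ := mem_Ledges.mpr ⟨he, hup⟩
    obtain ⟨hcardL, hcardU⟩ := hdeg v₂ hv₂
    apply hn
    cases hη₂ : A.η v₂
    case aiUp =>
      rw [hη₂] at hcardL
      rw [Finset.card_eq_zero.mp hcardL] at heL
      exact absurd heL (Finset.notMem_empty e)
    case aiDown =>
      rw [hη₂] at hcardL
      obtain ⟨e₂, he₂L, he₂e⟩ :=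
        Finset.exists_mem_ne (by rw [hcardL]; decide) e
      obtain ⟨he₂, hup₂⟩ := mem_Ledges.mp he₂L
      have h12 : v₁ ≠ v₂ := fun h => by rw [h, hη₂] at hη; cases hη
      exact ⟨⟨A.V.erase v₁, A.E.erase e, Function.update A.η v₂ .awDown, A.up, A.lo⟩,
        Or.inr (Or.inr (Or.inr (Or.inl ⟨v₁, v₂, e, e₂, hv₁, hv₂, h12, hη, hη₂,
          he, he₂, Ne.symm he₂e, hlo, hup, hup₂, rfl, rfl, rfl, rfl, rfl⟩)))⟩
    case awUp =>
      rw [hη₂] at hcardL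
      rw [Finset.card_eq_zero.mp hcardL] at heL
      exact absurd heL (Finset.notMem_empty e)
    case awDown =>
      have h12 : v₂ ≠ v₁ := fun h => by rw [h, hη] at hη₂; cases hη₂
      exact ⟨⟨(A.V.erase v₂).erase v₁, A.E.erase e, A.η, A.up, A.lo⟩,
        Or.inr (Or.inr (Or.inr (Or.inr (Or.inl ⟨v₂, v₁, e, hv₂, hv₁, h12, hη₂, hη,
          he, hup, hlo, rfl, rfl, rfl, rfl, rfl⟩))))⟩
    case acUp =>
      rw [hη₂] at hcardL hcardU
      obtain ⟨e₂, he₂L, he₂e⟩ :=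
        Finset.exists_mem_ne (by rw [hcardL]; decide) e
      obtain ⟨he₂, hup₂⟩ := mem_Ledges.mp he₂L
      obtain ⟨e₃, he₃U⟩ := Finset.card_pos.mp (by rw [hcardU]; decide)
      obtain ⟨he₃, hlo₃⟩ := mem_Uedges.mp he₃U
      have h12 : v₁ ≠ v₂ := fun h => by rw [h, hη₂] at hη; cases hη
      have hee₃ : e ≠ e₃ := by
        rintro rfl; rw [hlo] at hlo₃; exact h12 (Option.some_injective _ hlo₃)
      have he₂₃ : e₂ ≠ e₃ := by
        rintro rfl; exact no_loop hac he₂ hup₂ hlo₃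
      exact ⟨⟨(A.V.erase v₁).erase v₂, (A.E.erase e).erase e₃, A.η,
          Function.update A.up e₂ (A.up e₃), A.lo⟩,
        Or.inr (Or.inl ⟨v₁, v₂, e, e₂, e₃, hv₁, hv₂, h12, hη, hη₂, he, he₂, he₃,
          Ne.symm he₂e, hee₃, he₂₃, hlo, hup, hup₂, hlo₃, rfl, rfl, rfl, rfl, rfl⟩)⟩
    case acDown =>
      rw [hη₂] at hcardU
      obtain ⟨e₁, he₁U, e₂, he₂U, h12e⟩ :=
        Finset.one_lt_card.mp (by rw [hcardU]; decide)
      obtain ⟨he₁, hlo₁⟩ := mem_Uedges.mp he₁U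
      obtain ⟨he₂, hlo₂⟩ := mem_Uedges.mp he₂U
      have h12 : v₁ ≠ v₂ := fun h => by rw [h, hη₂] at hη; cases hη
      have hee₁ : e ≠ e₁ := by
        rintro rfl; rw [hlo] at hlo₁; exact h12 (Option.some_injective _ hlo₁)
      have hee₂ : e ≠ e₂ := by
        rintro rfl; rw [hlo] at hlo₂; exact h12 (Option.some_injective _ hlo₂)
      exact ⟨⟨A.V, A.E.erase e, Function.update A.η v₂ .awUp, A.up,
          Function.update A.lo e₁ (some v₁)⟩,
        Or.inr (Or.inr (Or.inr (Or.inr (Or.inr (Or.inr ⟨v₁, v₂, e, e₁, e₂,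
          hv₁, hv₂, h12, hη, hη₂, he, he₁, he₂, hee₁, hee₂, h12e,
          hlo, hup, hlo₁, hlo₂, rfl, rfl, rfl, rfl, rfl⟩)))))⟩

lemma normal_of_quiet {A : PreFlow} (hQ : QuietW A) : NormalW A := by
  rintro ⟨B, hB⟩
  obtain ⟨hQd, hQu⟩ := hQ
  rcases hB with h | h | h | h | h | h | h
  · obtain ⟨v₁, v₂, e, e₂, e₃, hv₁, hv₂, -, hη₁, -, he, -, -, -, -, -, hup, hlo, -⟩ := h
    rw [hQd v₁ hv₁ e he hη₁ hup] at hlo; cases hlo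
  · obtain ⟨v₁, v₂, e, e₂, e₃, hv₁, hv₂, -, hη₁, -, he, -, -, -, -, -, hlo, hup, -⟩ := h
    rw [hQu v₁ hv₁ e he hη₁ hlo] at hup; cases hup
  · obtain ⟨v₁, v₂, e, e₂, hv₁, hv₂, -, hη₁, -, he, -, -, hup, hlo, -⟩ := h
    rw [hQd v₁ hv₁ e he hη₁ hup] at hlo; cases hlo
  · obtain ⟨v₁, v₂, e, e₂, hv₁, hv₂, -, hη₁, -, he, -, -, hlo, hup, -⟩ := h
    rw [hQu v₁ hv₁ e he hη₁ hlo] at hup; cases hup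
  · obtain ⟨v₁, v₂, e, hv₁, hv₂, -, hη₁, -, he, hup, hlo, -⟩ := h
    rw [hQd v₁ hv₁ e he hη₁ hup] at hlo; cases hlo
  · obtain ⟨v₁, v₂, e, e₁, e₂, hv₁, hv₂, -, hη₁, -, he, -, -, -, -, -, hup, hlo, -⟩ := h
    rw [hQd v₁ hv₁ e he hη₁ hup] at hlo; cases hlo
  · obtain ⟨v₁, v₂, e, e₁, e₂, hv₁, hv₂, -, hη₁, -, he, -, -, -, -, -, hlo, hup, -⟩ := h
    rw [hQu v₁ hv₁ e he hη₁ hlo] at hup; cases hup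

lemma quiet_stepC {A B : PreFlow} (h : StepC A B) (hQ : QuietW A) : QuietW B := by
  obtain ⟨hQd, hQu⟩ := hQ
  rcases h with h | h | h
  · -- c↓-i↑
    obtain ⟨v₁, v₂, v₃, e, e₁, e₂, e₃, g₁, g₂, hv₁, hv₂, hv12, hv₃, hη₁, hη₂,
      he, he₁, he₂, he₃, hee₁, hee₂, hee₃, he₁₂, he₁₃, he₂₃, hg₁, hg₂, hg₁₂,
      hl₁, hl₂, hue, hle, hl₃, hBV, hBE, hBη, hBup, hBlo⟩ := h
    constructor
    · intro v hv e' he' hηv hup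
      rw [hBη] at hηv
      have hv3 : v ≠ v₃ := by rintro rfl; rw [Function.update_self] at hηv; cases hηv
      rw [Function.update_of_ne hv3] at hηv
      have hv1 : v ≠ v₁ := by rintro rfl; rw [Function.update_self] at hηv; cases hηv
      rw [Function.update_of_ne hv1] at hηv
      have hvA : v ∈ A.V := by
        rw [hBV] at hv
        rcases Finset.mem_insert.mp hv with rfl | hv'
        · exact absurd rfl hv3
        · exact hv'
      rw [hBup] at hup
      have heg2 : e' ≠ g₂ := by
        rintro rfl; rw [Function.update_self] at hup
        exact hv1 (Option.some_injective _ hup).symm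
      rw [Function.update_of_ne heg2] at hup
      have heg1 : e' ≠ g₁ := by
        rintro rfl; rw [Function.update_self] at hup
        exact hv1 (Option.some_injective _ hup).symm
      rw [Function.update_of_ne heg1] at hup
      have he'A : e' ∈ A.E := by
        rw [hBE] at he'
        rcases Finset.mem_insert.mp he' with rfl | he'
        · exact absurd rfl heg1
        rcases Finset.mem_insert.mp he' with rfl | he'
        · exact absurd rfl heg2
        exact Finset.mem_of_mem_erase he'
      have hloA := hQd v hvA e' he'A hηv hup
      have he'e₁ : e' ≠ e₁ := by rintro rfl; rw [hloA] at hl₁; cases hl₁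
      have he'e₂ : e' ≠ e₂ := by rintro rfl; rw [hloA] at hl₂; cases hl₂
      have he'e₃ : e' ≠ e₃ := by rintro rfl; rw [hloA] at hl₃; cases hl₃
      rw [hBlo, Function.update_of_ne heg2, Function.update_of_ne heg1,
        Function.update_of_ne he'e₃, Function.update_of_ne he'e₂,
        Function.update_of_ne he'e₁]
      exact hloA
    · intro v hv e' he' hηv hlo
      rw [hBη] at hηv
      have hv3 : v ≠ v₃ := by rintro rfl; rw [Function.update_self] at hηv; cases hηv
      rw [Function.update_of_ne hv3] at hηv
      have hv1 : v ≠ v₁ := by rintro rfl; rw [Function.update_self] at hηv; cases hηv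
      rw [Function.update_of_ne hv1] at hηv
      have hvA : v ∈ A.V := by
        rw [hBV] at hv
        rcases Finset.mem_insert.mp hv with rfl | hv'
        · exact absurd rfl hv3
        · exact hv'
      have hv2 : v ≠ v₂ := by rintro rfl; rw [hη₂] at hηv; cases hηv
      rw [hBlo] at hlo
      have heg2 : e' ≠ g₂ := by
        rintro rfl; rw [Function.update_self] at hlo
        exact hv3 (Option.some_injective _ hlo).symm
      rw [Function.update_of_ne heg2] at hlo
      have heg1 : e' ≠ g₁ := by
        rintro rfl; rw [Function.update_self] at hlo
        exact hv2 (Option.some_injective _ hlo).symm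
      rw [Function.update_of_ne heg1] at hlo
      have he'e₃ : e' ≠ e₃ := by
        rintro rfl; rw [Function.update_self] at hlo
        exact hv1 (Option.some_injective _ hlo).symm
      rw [Function.update_of_ne he'e₃] at hlo
      have he'e₂ : e' ≠ e₂ := by
        rintro rfl; rw [Function.update_self] at hlo
        exact hv3 (Option.some_injective _ hlo).symm
      rw [Function.update_of_ne he'e₂] at hlo
      have he'e₁ : e' ≠ e₁ := by
        rintro rfl; rw [Function.update_self] at hlo
        exact hv2 (Option.some_injective _ hlo).symm
      rw [Function.update_of_ne he'e₁] at hlo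
      have he'A : e' ∈ A.E := by
        rw [hBE] at he'
        rcases Finset.mem_insert.mp he' with rfl | he'
        · exact absurd rfl heg1
        rcases Finset.mem_insert.mp he' with rfl | he'
        · exact absurd rfl heg2
        exact Finset.mem_of_mem_erase he'
      rw [hBup, Function.update_of_ne heg2, Function.update_of_ne heg1]
      exact hQu v hvA e' he'A hηv hlo
  · -- i↓-c↑ (dual)
    obtain ⟨v₁, v₂, v₃, e, e₁, e₂, e₃, g₁, g₂, hv₁, hv₂, hv12, hv₃, hη₁, hη₂,
      he, he₁, he₂, he₃, hee₁, hee₂, hee₃, he₁₂, he₁₃, he₂₃, hg₁, hg₂, hg₁₂,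
      hu₁, hu₂, hle, hue, hu₃, hBV, hBE, hBη, hBlo, hBup⟩ := h
    constructor
    · intro v hv e' he' hηv hup
      rw [hBη] at hηv
      have hv3 : v ≠ v₃ := by rintro rfl; rw [Function.update_self] at hηv; cases hηv
      rw [Function.update_of_ne hv3] at hηv
      have hv1 : v ≠ v₁ := by rintro rfl; rw [Function.update_self] at hηv; cases hηv
      rw [Function.update_of_ne hv1] at hηv
      have hvA : v ∈ A.V := by
        rw [hBV] at hv
        rcases Finset.mem_insert.mp hv with rfl | hv'
        · exact absurd rfl hv3
        · exact hv'
      have hv2 : v ≠ v₂ := by rintro rfl; rw [hη₂] at hηv; cases hηv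
      rw [hBup] at hup
      have heg2 : e' ≠ g₂ := by
        rintro rfl; rw [Function.update_self] at hup
        exact hv3 (Option.some_injective _ hup).symm
      rw [Function.update_of_ne heg2] at hup
      have heg1 : e' ≠ g₁ := by
        rintro rfl; rw [Function.update_self] at hup
        exact hv2 (Option.some_injective _ hup).symm
      rw [Function.update_of_ne heg1] at hup
      have he'e₃ : e' ≠ e₃ := by
        rintro rfl; rw [Function.update_self] at hup
        exact hv1 (Option.some_injective _ hup).symm
      rw [Function.update_of_ne he'e₃] at hup
      have he'e₂ : e' ≠ e₂ := by
        rintro rfl; rw [Function.update_self] at hup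
        exact hv3 (Option.some_injective _ hup).symm
      rw [Function.update_of_ne he'e₂] at hup
      have he'e₁ : e' ≠ e₁ := by
        rintro rfl; rw [Function.update_self] at hup
        exact hv2 (Option.some_injective _ hup).symm
      rw [Function.update_of_ne he'e₁] at hup
      have he'A : e' ∈ A.E := by
        rw [hBE] at he'
        rcases Finset.mem_insert.mp he' with rfl | he'
        · exact absurd rfl heg1
        rcases Finset.mem_insert.mp he' with rfl | he'
        · exact absurd rfl heg2
        exact Finset.mem_of_mem_erase he'
      rw [hBlo, Function.update_of_ne heg2, Function.update_of_ne heg1]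
      exact hQd v hvA e' he'A hηv hup
    · intro v hv e' he' hηv hlo
      rw [hBη] at hηv
      have hv3 : v ≠ v₃ := by rintro rfl; rw [Function.update_self] at hηv; cases hηv
      rw [Function.update_of_ne hv3] at hηv
      have hv1 : v ≠ v₁ := by rintro rfl; rw [Function.update_self] at hηv; cases hηv
      rw [Function.update_of_ne hv1] at hηv
      have hvA : v ∈ A.V := by
        rw [hBV] at hv
        rcases Finset.mem_insert.mp hv with rfl | hv'
        · exact absurd rfl hv3
        · exact hv'
      rw [hBlo] at hlo
      have heg2 : e' ≠ g₂ := by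
        rintro rfl; rw [Function.update_self] at hlo
        exact hv1 (Option.some_injective _ hlo).symm
      rw [Function.update_of_ne heg2] at hlo
      have heg1 : e' ≠ g₁ := by
        rintro rfl; rw [Function.update_self] at hlo
        exact hv1 (Option.some_injective _ hlo).symm
      rw [Function.update_of_ne heg1] at hlo
      have he'A : e' ∈ A.E := by
        rw [hBE] at he'
        rcases Finset.mem_insert.mp he' with rfl | he'
        · exact absurd rfl heg1
        rcases Finset.mem_insert.mp he' with rfl | he'
        · exact absurd rfl heg2
        exact Finset.mem_of_mem_erase he'
      have hupA := hQu v hvA e' he'A hηv hlo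
      have he'e₁ : e' ≠ e₁ := by rintro rfl; rw [hupA] at hu₁; cases hu₁
      have he'e₂ : e' ≠ e₂ := by rintro rfl; rw [hupA] at hu₂; cases hu₂
      have he'e₃ : e' ≠ e₃ := by rintro rfl; rw [hupA] at hu₃; cases hu₃
      rw [hBup, Function.update_of_ne heg2, Function.update_of_ne heg1,
        Function.update_of_ne he'e₃, Function.update_of_ne he'e₂,
        Function.update_of_ne he'e₁]
      exact hupA
  · -- c↓-c↑
    obtain ⟨v₁, v₂, v₃, v₄, e, e₁, e₂, e₃, e₄, g₁₁, g₁₂, g₂₁, g₂₂,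
      hv₁, hv₂, hv12, hv₃, hv₄, hv34, hη₁, hη₂,
      he, he₁, he₂, he₃, he₄, hee₁, hee₂, hee₃, hee₄,
      he₁₂, he₁₃, he₁₄, he₂₃, he₂₄, he₃₄,
      hg₁₁, hg₁₂, hg₂₁, hg₂₂, hgn₁, hgn₂, hgn₃, hgn₄, hgn₅, hgn₆,
      hl₁, hl₂, hue, hle, hu₃, hu₄, hBV, hBE, hBη, hBup, hBlo⟩ := h
    have hvmem : ∀ v, v ∈ B.V → v ≠ v₃ → v ≠ v₄ → v ∈ A.V := by
      intro v hv h3 h4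
      rw [hBV] at hv
      rcases Finset.mem_insert.mp hv with rfl | hv'
      · exact absurd rfl h3
      rcases Finset.mem_insert.mp hv' with rfl | hv''
      · exact absurd rfl h4
      exact hv''
    have hemem : ∀ e', e' ∈ B.E → e' ≠ g₁₁ → e' ≠ g₁₂ → e' ≠ g₂₁ → e' ≠ g₂₂ →
        e' ∈ A.E := by
      intro e' he' h1 h2 h3 h4
      rw [hBE] at he'
      rcases Finset.mem_insert.mp he' with rfl | he'
      · exact absurd rfl h1
      rcases Finset.mem_insert.mp he' with rfl | he'
      · exact absurd rfl h2
      rcases Finset.mem_insert.mp he' with rfl | he'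
      · exact absurd rfl h3
      rcases Finset.mem_insert.mp he' with rfl | he'
      · exact absurd rfl h4
      exact Finset.mem_of_mem_erase he'
    constructor
    · intro v hv e' he' hηv hup
      rw [hBη] at hηv
      have hv4 : v ≠ v₄ := by rintro rfl; rw [Function.update_self] at hηv; cases hηv
      rw [Function.update_of_ne hv4] at hηv
      have hv3 : v ≠ v₃ := by rintro rfl; rw [Function.update_self] at hηv; cases hηv
      rw [Function.update_of_ne hv3] at hηv
      have hv2 : v ≠ v₂ := by rintro rfl; rw [Function.update_self] at hηv; cases hηv
      rw [Function.update_of_ne hv2] at hηv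
      have hv1 : v ≠ v₁ := by rintro rfl; rw [Function.update_self] at hηv; cases hηv
      rw [Function.update_of_ne hv1] at hηv
      have hvA : v ∈ A.V := hvmem v hv hv3 hv4
      rw [hBup] at hup
      have h6 : e' ≠ g₂₂ := by
        rintro rfl; rw [Function.update_self] at hup
        exact hv2 (Option.some_injective _ hup).symm
      rw [Function.update_of_ne h6] at hup
      have h5 : e' ≠ g₂₁ := by
        rintro rfl; rw [Function.update_self] at hup
        exact hv2 (Option.some_injective _ hup).symm
      rw [Function.update_of_ne h5] at hup
      have h4 : e' ≠ g₁₂ := by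
        rintro rfl; rw [Function.update_self] at hup
        exact hv1 (Option.some_injective _ hup).symm
      rw [Function.update_of_ne h4] at hup
      have h3 : e' ≠ g₁₁ := by
        rintro rfl; rw [Function.update_self] at hup
        exact hv1 (Option.some_injective _ hup).symm
      rw [Function.update_of_ne h3] at hup
      have h2 : e' ≠ e₄ := by
        rintro rfl; rw [Function.update_self] at hup
        exact hv4 (Option.some_injective _ hup).symm
      rw [Function.update_of_ne h2] at hup
      have h1 : e' ≠ e₃ := by
        rintro rfl; rw [Function.update_self] at hup
        exact hv3 (Option.some_injective _ hup).symm
      rw [Function.update_of_ne h1] at hup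
      have he'A : e' ∈ A.E := hemem e' he' h3 h4 h5 h6
      have hloA := hQd v hvA e' he'A hηv hup
      have hne₂ : e' ≠ e₂ := by rintro rfl; rw [hloA] at hl₂; cases hl₂
      rw [hBlo, Function.update_of_ne h6, Function.update_of_ne h5,
        Function.update_of_ne h4, Function.update_of_ne h3,
        Function.update_of_ne hne₂]
      exact hloA
    · intro v hv e' he' hηv hlo
      rw [hBη] at hηv
      have hv4 : v ≠ v₄ := by rintro rfl; rw [Function.update_self] at hηv; cases hηv
      rw [Function.update_of_ne hv4] at hηv
      have hv3 : v ≠ v₃ := by rintro rfl; rw [Function.update_self] at hηv; cases hηv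
      rw [Function.update_of_ne hv3] at hηv
      have hv2 : v ≠ v₂ := by rintro rfl; rw [Function.update_self] at hηv; cases hηv
      rw [Function.update_of_ne hv2] at hηv
      have hv1 : v ≠ v₁ := by rintro rfl; rw [Function.update_self] at hηv; cases hηv
      rw [Function.update_of_ne hv1] at hηv
      have hvA : v ∈ A.V := hvmem v hv hv3 hv4
      rw [hBlo] at hlo
      have h6 : e' ≠ g₂₂ := by
        rintro rfl; rw [Function.update_self] at hlo
        exact hv4 (Option.some_injective _ hlo).symm
      rw [Function.update_of_ne h6] at hlo
      have h5 : e' ≠ g₂₁ := by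
        rintro rfl; rw [Function.update_self] at hlo
        exact hv3 (Option.some_injective _ hlo).symm
      rw [Function.update_of_ne h5] at hlo
      have h4 : e' ≠ g₁₂ := by
        rintro rfl; rw [Function.update_self] at hlo
        exact hv4 (Option.some_injective _ hlo).symm
      rw [Function.update_of_ne h4] at hlo
      have h3 : e' ≠ g₁₁ := by
        rintro rfl; rw [Function.update_self] at hlo
        exact hv3 (Option.some_injective _ hlo).symm
      rw [Function.update_of_ne h3] at hlo
      have h0 : e' ≠ e₂ := by
        rintro rfl; rw [Function.update_self] at hlo
        exact hv2 (Option.some_injective _ hlo).symm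
      rw [Function.update_of_ne h0] at hlo
      have he'A : e' ∈ A.E := hemem e' he' h3 h4 h5 h6
      have hupA := hQu v hvA e' he'A hηv hlo
      have hne₃ : e' ≠ e₃ := by rintro rfl; rw [hupA] at hu₃; cases hu₃
      have hne₄ : e' ≠ e₄ := by rintro rfl; rw [hupA] at hu₄; cases hu₄
      rw [hBup, Function.update_of_ne h6, Function.update_of_ne h5,
        Function.update_of_ne h4, Function.update_of_ne h3,
        Function.update_of_ne hne₄, Function.update_of_ne hne₃]
      exact hupA

/-- If an atomic flow `A` is normal for the flow
rewriting system `w` and `A →c* B`, then `B` is normal for `w`. -/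
theorem statement_13 (A B : PreFlow) (hA : A.IsFlow) (hn : NormalW A)
    (h : Relation.ReflTransGen StepC A B) : NormalW B := by
  have hQ : QuietW B := by
    induction h with
    | refl => exact quiet_of_normal hA hn
    | tail _ hstep ih => exact quiet_stepC hstep ih
  exact normal_of_quiet hQ

end AF
end

section
/- If an atomic flow B is cycle-free and B →_se C, then C is cycle-free. -/
set_option linter.unusedVariables false

/-!
An ai-path is the same thing as a walk along oriented edges that reverses its direction only at an
interaction or cointeraction vertex, and there through a different edge. A closed walk contains an
ai-cycle: cut it at a repeated edge and recurse on the shorter closed walk. So it suffices to send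
closed walks of `C` to closed walks of `B`. Both copies of `A` project onto `B` edge by edge; the
glued edge, which runs from the upper end of `e3` to the lower end of `e2`, projects onto the
ai-path `e3, e0, e2` through the cointeraction and the interaction, and the new weakening and
coweakening, which sit on copies of `e2` and `e3`, project onto the interaction and the
cointeraction. A closed walk based at a new cocontraction (contraction) can only leave and come
back through the two copies of one upper (lower) edge of `B`, so its projection is a walk from `⊤`
to `⊤` (`⊥` to `⊥`) using that edge twice, which contains an ai-cycle as well.
-/

namespace List

variable {α β : Type*}

lemma isChain_iff_getD {R : α → α → Prop} {l : List α} (x : α) :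
    l.IsChain R ↔ ∀ i, i + 1 < l.length → R (l.getD i x) (l.getD (i + 1) x) := by
  rw [isChain_iff_getElem]
  refine forall_congr' fun i => forall_congr' fun hi => ?_
  rw [getD_eq_getElem _ _ (Nat.lt_of_succ_lt hi), getD_eq_getElem _ _ hi]

lemma exists_eq_append_of_not_nodup_map {f : α → β} :
    ∀ {l : List α}, ¬ (l.map f).Nodup → ∃ a x b y c, l = a ++ x :: (b ++ y :: c) ∧ f x = f y
  | [] => by simp
  | z :: l => by
    intro h
    by_cases hl : (l.map f).Nodup
    · obtain ⟨y, hy, hfy⟩ := mem_map.1 (by simpa [hl] using h)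
      obtain ⟨b, c, rfl⟩ := append_of_mem hy
      exact ⟨[], z, b, y, c, rfl, hfy.symm⟩
    · obtain ⟨a, x, b, y, c, rfl, hxy⟩ := exists_eq_append_of_not_nodup_map hl
      exact ⟨z :: a, x, b, y, c, rfl, hxy⟩

end List

namespace AF

/-- An edge with a direction of traversal; `down = true` means from its upper to its lower end. -/
structure Dart where
  edge : ℕ
  down : Bool
  deriving DecidableEq

namespace Dart

variable {F : PreFlow}

def rev (d : Dart) : Dart := ⟨d.edge, !d.down⟩

def src (F : PreFlow) (d : Dart) : VPt :=
  if d.down then (F.up d.edge).elim .top .ver else (F.lo d.edge).elim .bot .ver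

def tgt (F : PreFlow) (d : Dart) : VPt := d.rev.src F

def Linked (F : PreFlow) (d d' : Dart) : Prop :=
  ∃ v ∈ F.V, d.tgt F = .ver v ∧ d'.src F = .ver v ∧
    (d.down = d'.down ∨ ((F.η v = .aiDown ∨ F.η v = .aiUp) ∧ d.edge ≠ d'.edge))

@[simp] lemma rev_rev (d : Dart) : d.rev.rev = d := by simp [rev]

@[simp] lemma src_rev (d : Dart) : d.rev.src F = d.tgt F := rfl

@[simp] lemma tgt_rev (d : Dart) : d.rev.tgt F = d.src F := by simp [tgt]

lemma option_elim_eq_ver_iff {o : Option ℕ} {c : VPt} (hc : ∀ v, c ≠ .ver v) {v : ℕ} :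
    o.elim c VPt.ver = .ver v ↔ o = some v := by
  cases o <;> simp [hc]

lemma src_eq_ver_iff {d : Dart} {u : ℕ} :
    d.src F = .ver u ↔ (if d.down then F.up d.edge else F.lo d.edge) = some u := by
  rcases d with ⟨e, _ | _⟩ <;> simp [src, option_elim_eq_ver_iff]

lemma down_of_src_eq_top {d : Dart} (h : d.src F = .top) : d.down = true := by
  rcases d with ⟨e, _ | _⟩
  · cases he : F.lo e <;> simp [src, he] at h
  · rfl

lemma down_of_src_eq_bot {d : Dart} (h : d.src F = .bot) : d.down = false := by
  rcases d with ⟨e, _ | _⟩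
  · rfl
  · cases he : F.up e <;> simp [src, he] at h

lemma exists_ver_of_tgt_eq_src {a b : Dart} {ν : VPt} (ha : a.tgt F = ν) (hb : b.src F = ν)
    (hdown : a.down = b.down) : ∃ u, ν = .ver u := by
  cases ν with
  | ver u => exact ⟨u, rfl⟩
  | top =>
    have := down_of_src_eq_top (d := a.rev) ha
    simp [rev, hdown, down_of_src_eq_top hb] at this
  | bot =>
    have := down_of_src_eq_bot (d := a.rev) ha
    simp [rev, hdown, down_of_src_eq_bot hb] at this

lemma Linked.rev {d d' : Dart} (h : Linked F d d') : Linked F d'.rev d.rev := by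
  obtain ⟨v, hv, hd, hd', hturn⟩ := h
  refine ⟨v, hv, by simpa using hd', by simpa using hd, ?_⟩
  simp only [Dart.rev, Bool.not_inj_iff]
  tauto

lemma not_linked_rev (d : Dart) : ¬ Linked F d d.rev := by
  rintro ⟨v, -, -, -, h | ⟨-, h⟩⟩
  · cases d; simp [Dart.rev] at h
  · exact h rfl

lemma linked_mk_true_iff {a b : ℕ} :
    Linked F ⟨a, true⟩ ⟨b, true⟩ ↔ ∃ v ∈ F.V, F.lo a = some v ∧ F.up b = some v := by
  simp [Linked, tgt, src, Dart.rev, option_elim_eq_ver_iff]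

end Dart

def PreFlow.IsInner (F : PreFlow) (x : ℕ) : Prop := x ∈ F.E ∧ (F.up x).isSome ∧ (F.lo x).isSome

structure IsWalk (F : PreFlow) (ν ν' : VPt) (w : List Dart) : Prop where
  edge_mem : ∀ d ∈ w, d.edge ∈ F.E
  isChain : w.IsChain (Dart.Linked F)
  head_src : w.head?.map (Dart.src F) = some ν
  last_tgt : w.getLast?.map (Dart.tgt F) = some ν'

lemma isWalk_iff {F : PreFlow} {ν ν' : VPt} {w : List Dart} :
    IsWalk F ν ν' w ↔ (∀ d ∈ w, d.edge ∈ F.E) ∧ w.IsChain (Dart.Linked F) ∧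
      w.head?.map (Dart.src F) = some ν ∧ w.getLast?.map (Dart.tgt F) = some ν' :=
  ⟨fun ⟨h₁, h₂, h₃, h₄⟩ => ⟨h₁, h₂, h₃, h₄⟩, fun ⟨h₁, h₂, h₃, h₄⟩ => ⟨h₁, h₂, h₃, h₄⟩⟩

namespace IsWalk

variable {F : PreFlow} {ν ν' : VPt} {w : List Dart}

lemma ne_nil (h : IsWalk F ν ν' w) : w ≠ [] := by
  rintro rfl; simpa using h.head_src

lemma singleton {d : Dart} (hd : d.edge ∈ F.E) : IsWalk F (d.src F) (d.tgt F) [d] :=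
  ⟨by simpa, List.isChain_singleton d, rfl, rfl⟩

lemma reverse (h : IsWalk F ν ν' w) : IsWalk F ν' ν (w.reverse.map Dart.rev) := by
  obtain ⟨hE, hchain, hsrc, htgt⟩ := h
  refine ⟨by simpa [Dart.rev] using hE, ?_, ?_, ?_⟩
  · rw [List.isChain_map, List.isChain_reverse]
    exact hchain.imp fun _ _ hl => hl.rev
  · simpa [List.head?_reverse, Option.map_map, Function.comp_def] using htgt
  · simpa [List.getLast?_reverse, Option.map_map, Function.comp_def] using hsrc

lemma append {ν₁ ν₂ : VPt} {w₁ w₂ : List Dart} (h₁ : IsWalk F ν ν₁ w₁) (h₂ : IsWalk F ν₂ ν' w₂)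
    (hlink : ∀ a ∈ w₁.getLast?, ∀ b ∈ w₂.head?, Dart.Linked F a b) :
    IsWalk F ν ν' (w₁ ++ w₂) := by
  obtain ⟨hE₁, hc₁, hs₁, -⟩ := h₁
  obtain ⟨hE₂, hc₂, -, ht₂⟩ := h₂
  have hne₁ : w₁ ≠ [] := by rintro rfl; simp at hs₁
  have hne₂ : w₂ ≠ [] := by rintro rfl; simp at ht₂
  refine ⟨fun d hd => (List.mem_append.1 hd).elim (hE₁ d) (hE₂ d),
    List.isChain_append.2 ⟨hc₁, hc₂, hlink⟩, ?_, ?_⟩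
  · rwa [List.head?_append_of_ne_nil _ hne₁]
  · rwa [List.getLast?_append_of_ne_nil _ hne₂]

lemma of_infix {μ μ' : VPt} {s : List Dart} (h : IsWalk F ν ν' w) (hs : s <:+: w)
    (hsrc : s.head?.map (Dart.src F) = some μ) (htgt : s.getLast?.map (Dart.tgt F) = some μ') :
    IsWalk F μ μ' s :=
  ⟨fun d hd => h.edge_mem d (hs.subset hd), h.isChain.infix hs, hsrc, htgt⟩

lemma exists_src_eq_ver {x : ℕ} (h : IsWalk F (.ver x) ν' w) {d : Dart} (hd : d ∈ w) :
    ∃ u, d.src F = .ver u := by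
  obtain ⟨a, c, rfl⟩ := List.append_of_mem hd
  rcases a.eq_nil_or_concat with rfl | ⟨a', z, rfl⟩
  · exact ⟨x, by simpa using h.head_src⟩
  · have hlink := List.isChain_iff_forall_rel_of_append_cons_cons.1 h.isChain
    obtain ⟨u, -, -, hu, -⟩ := @hlink z d a' c (by simp)
    exact ⟨u, hu⟩

lemma exists_tgt_eq_ver {x : ℕ} (h : IsWalk F ν (.ver x) w) {d : Dart} (hd : d ∈ w) :
    ∃ u, d.tgt F = .ver u := by
  simpa using h.reverse.exists_src_eq_ver (d := d.rev) (by simpa using ⟨d, hd, rfl⟩)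

lemma isInner {x x' : ℕ} (h : IsWalk F (.ver x) (.ver x') w) {d : Dart} (hd : d ∈ w) :
    F.IsInner d.edge := by
  obtain ⟨u, hu⟩ := h.exists_src_eq_ver hd
  obtain ⟨u', hu'⟩ := h.exists_tgt_eq_ver hd
  rw [Dart.src_eq_ver_iff] at hu
  rw [← Dart.src_rev, Dart.src_eq_ver_iff] at hu'
  refine ⟨h.edge_mem d hd, ?_⟩
  rcases d with ⟨e, _ | _⟩ <;> simp_all [Dart.rev]

end IsWalk

lemma isWalk_reverse_iff {F : PreFlow} {ν ν' : VPt} {w : List Dart} :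
    IsWalk F ν' ν (w.reverse.map Dart.rev) ↔ IsWalk F ν ν' w := by
  refine ⟨fun h => ?_, IsWalk.reverse⟩
  simpa [List.map_reverse, List.map_map, Function.comp_def] using h.reverse

lemma srcOK_iff {F : PreFlow} {ν : VPt} {e : ℕ} : srcOK F ν e ↔ Dart.src F ⟨e, true⟩ = ν := by
  cases ν <;> cases h : F.up e <;> simp [srcOK, Dart.src, h, eq_comm]

lemma tgtOK_iff {F : PreFlow} {ν : VPt} {e : ℕ} : tgtOK F ν e ↔ Dart.tgt F ⟨e, true⟩ = ν := by
  cases ν <;> cases h : F.lo e <;> simp [tgtOK, Dart.tgt, Dart.src, Dart.rev, h, eq_comm]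

lemma isDownPath_iff {F : PreFlow} {ν ν' : VPt} {l : List ℕ} :
    IsDownPath F ν ν' l ↔ IsWalk F ν ν' (l.map (⟨·, true⟩)) := by
  rw [isWalk_iff, List.forall_mem_map, List.isChain_map, List.isChain_iff_getD 0]
  rcases l.eq_nil_or_concat with rfl | ⟨l', e, rfl⟩
  · simp [IsDownPath]
  simp [IsDownPath, srcOK_iff, tgtOK_iff, Dart.linked_mk_true_iff]
  rcases l' with _ | ⟨a, l'⟩ <;> simp

lemma isPath_iff {F : PreFlow} {ν ν' : VPt} {l : List ℕ} :
    IsPath F ν ν' l ↔ IsWalk F ν ν' (l.map (⟨·, true⟩)) ∨ IsWalk F ν ν' (l.map (⟨·, false⟩)) := by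
  rw [IsPath, isDownPath_iff, isDownPath_iff,
    ← isWalk_reverse_iff (ν := ν) (ν' := ν') (w := l.map (⟨·, false⟩))]
  simp [List.map_reverse, List.map_map, Function.comp_def, Dart.rev]

lemma exists_isWalk_of_aiPath {F : PreFlow} {ν ν' : VPt} {l : List ℕ} (h : AIPath F ν ν' l) :
    ∃ w : List Dart, w.map Dart.edge = l ∧ IsWalk F ν ν' w := by
  induction h with
  | single hp =>
    rcases isPath_iff.1 hp with hw | hw
    · exact ⟨_, by simp [Function.comp_def], hw⟩
    · exact ⟨_, by simp [Function.comp_def], hw⟩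
  | join hv hai _ _ hee' ih₁ ih₂ =>
    obtain ⟨w₁, hw₁e, hw₁⟩ := ih₁
    obtain ⟨w₂, hw₂e, hw₂⟩ := ih₂
    refine ⟨w₁ ++ w₂, by simp [hw₁e, hw₂e], hw₁.append hw₂ fun a ha b hb => ?_⟩
    rw [Option.mem_def] at ha hb
    have hae := congrArg List.getLast? hw₁e
    have hbe := congrArg List.head? hw₂e
    simp only [List.getLast?_map, List.head?_map, ha, hb, List.getLast?_concat, List.head?_cons,
      Option.map_some, Option.some.injEq] at hae hbe
    have hta := hw₁.last_tgt
    have hsb := hw₂.head_src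
    simp only [ha, hb, Option.map_some, Option.some.injEq] at hta hsb
    exact ⟨_, hv, hta, hsb, Or.inr ⟨hai, hae ▸ hbe ▸ hee'⟩⟩

lemma map_edge_map_mk_of_isChain_down {w : List Dart}
    (h : w.IsChain (fun a b => a.down = b.down)) :
    ∀ d ∈ w.head?, (w.map Dart.edge).map (⟨·, d.down⟩) = w := by
  rcases w with _ | ⟨d, w⟩
  · simp
  rintro _ ⟨⟩
  have hrep := List.isChain_cons_eq_iff_eq_replicate.1 ((List.isChain_map Dart.down).2 h)
  rw [List.eq_replicate_iff] at hrep
  simp only [List.map_cons, List.map_map, List.cons.injEq, true_and]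
  conv_rhs => rw [← List.map_id w]
  refine List.map_congr_left fun x hx => ?_
  have := hrep.2 _ (List.mem_map_of_mem (f := Dart.down) hx)
  cases x
  simp_all

/-- A walk is cut into paths where it changes direction. -/
lemma aiPath_of_isWalk {F : PreFlow} {ν ν' : VPt} {w : List Dart} (h : IsWalk F ν ν' w) :
    AIPath F ν ν' (w.map Dart.edge) := by
  induction hn : w.length using Nat.strong_induction_on generalizing w ν ν' with
  | _ n ih =>
  by_cases hc : w.IsChain (fun a b => a.down = b.down)
  · obtain ⟨d, hd⟩ : ∃ d, w.head? = some d := by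
      cases hw : w.head? <;> simp_all [h.ne_nil]
    have hw := map_edge_map_mk_of_isChain_down hc d hd
    refine AIPath.single (isPath_iff.2 ?_)
    cases hdown : d.down <;> rw [hdown] at hw
    · exact Or.inr (by rwa [hw])
    · exact Or.inl (by rwa [hw])
  obtain ⟨a, b, l₁, l₂, rfl, hab⟩ : ∃ a b l₁ l₂, w = l₁ ++ a :: b :: l₂ ∧ a.down ≠ b.down := by
    simpa [List.isChain_iff_forall_rel_of_append_cons_cons] using hc
  obtain ⟨v, hv, hta, hsb, hturn⟩ := List.isChain_iff_forall_rel_of_append_cons_cons.1 h.isChain rfl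
  obtain ⟨hai, hedge⟩ := hturn.resolve_left hab
  have h₁ : IsWalk F ν (.ver v) (l₁ ++ [a]) :=
    h.of_infix ⟨[], b :: l₂, by simp⟩ (by simpa [List.head?_append] using h.head_src)
      (by simpa using hta)
  have h₂ : IsWalk F (.ver v) ν' (b :: l₂) :=
    h.of_infix ⟨l₁ ++ [a], [], by simp⟩ (by simpa using hsb) (by
      simpa [List.getLast?_append, List.getLast?_cons] using h.last_tgt)
  have p₁ : AIPath F ν (.ver v) (l₁.map Dart.edge ++ [a.edge]) := by
    simpa using ih _ (by simp [← hn]) h₁ rfl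
  have p₂ : AIPath F (.ver v) ν' (b.edge :: l₂.map Dart.edge) := by
    simpa using ih _ (by simp [← hn]; omega) h₂ rfl
  simpa using AIPath.join hv hai p₁ p₂ hedge

section Cycles

variable {F : PreFlow}

lemma exists_shorter_closed_walk_of_dart_twice {ν ν' : VPt} {a b c : List Dart} {d : Dart}
    (h : IsWalk F ν ν' (a ++ d :: (b ++ d :: c))) :
    ∃ u ∈ F.V, ∃ w', IsWalk F (.ver u) (.ver u) w' ∧
      w'.length < (a ++ d :: (b ++ d :: c)).length := by
  have hsplit : ((a ++ d :: b) ++ d :: c).IsChain (Dart.Linked F) := by simpa using h.isChain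
  obtain ⟨u, hu, hlast, hd, -⟩ := (List.isChain_append.1 hsplit).2.2
    ((d :: b).getLast (by simp)) (by simp [List.getLast?_eq_some_getLast]) d rfl
  refine ⟨u, hu, d :: b, h.of_infix ⟨a, d :: c, by simp⟩ (by simpa using hd) ?_, by simp; omega⟩
  simpa [List.getLast?_eq_some_getLast] using hlast

lemma exists_shorter_closed_walk_of_dart_rev {ν ν' : VPt} {a b c : List Dart} {d : Dart}
    (h : IsWalk F ν ν' (a ++ d :: (b ++ d.rev :: c))) :
    ∃ u ∈ F.V, ∃ w', IsWalk F (.ver u) (.ver u) w' ∧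
      w'.length < (a ++ d :: (b ++ d.rev :: c)).length := by
  have hchain := h.isChain
  by_cases hac : a = [] ∧ c = []
  · -- the walk is `d, b, d.rev`: then `b` is closed at the target of `d`
    obtain ⟨rfl, rfl⟩ := hac
    have hb : b ≠ [] := by
      rintro rfl
      exact d.not_linked_rev (List.isChain_pair.1 (by simpa using hchain))
    have hsplit : ([d] ++ b ++ [d.rev]).IsChain (Dart.Linked F) := by simpa using hchain
    obtain ⟨u, hu, hd, hbh, -⟩ := (List.isChain_append.1 (List.isChain_append.1 hsplit).1).2.2
      d rfl (b.head hb) (by simp [List.head?_eq_some_head hb])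
    obtain ⟨u', -, hbl, hdr, -⟩ := (List.isChain_append.1 hsplit).2.2 (b.getLast hb)
      (by rw [List.getLast?_append_of_ne_nil _ hb, List.getLast?_eq_some_getLast hb]; rfl)
      d.rev rfl
    have hu' : u' = u := by simpa [hd] using hdr.symm
    rw [hu'] at hbl
    refine ⟨u, hu, b, h.of_infix ⟨[d], [d.rev], by simp⟩ ?_ ?_, by simp⟩
    · simpa [List.head?_eq_some_head hb] using hbh
    · simpa [List.getLast?_eq_some_getLast hb] using hbl
  -- otherwise `d, b, d.rev` is a shorter closed walk at the source of `d`
  obtain ⟨u, hu, hd⟩ : ∃ u ∈ F.V, d.src F = .ver u := by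
    rcases not_and_or.1 hac with ha | hc
    · obtain ⟨u, hu, -, hd, -⟩ := ((List.isChain_append (l₁ := a)).1 hchain).2.2
        (a.getLast ha) (List.getLast?_eq_some_getLast ha) d rfl
      exact ⟨u, hu, hd⟩
    · have hsplit : ((a ++ d :: b ++ [d.rev]) ++ c).IsChain (Dart.Linked F) := by
        simpa using hchain
      obtain ⟨u, hu, hd, -, -⟩ := (List.isChain_append.1 hsplit).2.2
        d.rev (by rw [List.getLast?_concat]; rfl) (c.head hc) (List.head?_eq_some_head hc)
      exact ⟨u, hu, by simpa using hd⟩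
  refine ⟨u, hu, d :: (b ++ [d.rev]), h.of_infix ⟨a, c, by simp⟩ (by simpa using hd) ?_, ?_⟩
  · rw [← List.cons_append, List.getLast?_concat]
    simpa using hd
  simp only [List.length_cons, List.length_append, List.length_nil]
  rcases not_and_or.1 hac with ha | hc
  · have := List.length_pos_iff.2 ha; omega
  · have := List.length_pos_iff.2 hc; omega

lemma exists_shorter_closed_walk {ν ν' : VPt} {w : List Dart} (h : IsWalk F ν ν' w)
    (hnd : ¬ (w.map Dart.edge).Nodup) :
    ∃ u ∈ F.V, ∃ w', IsWalk F (.ver u) (.ver u) w' ∧ w'.length < w.length := by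
  obtain ⟨a, d, b, d', c, rfl, hdd'⟩ := List.exists_eq_append_of_not_nodup_map hnd
  obtain rfl | rfl : d' = d ∨ d' = d.rev := by
    rcases d with ⟨e, x⟩; rcases d' with ⟨e', x'⟩
    cases x <;> cases x' <;> simp_all [Dart.rev]
  exacts [exists_shorter_closed_walk_of_dart_twice h, exists_shorter_closed_walk_of_dart_rev h]

theorem hasAICycle_of_isWalk_self {u : ℕ} {w : List Dart} (h : IsWalk F (.ver u) (.ver u) w)
    (hu : u ∈ F.V) : HasAICycle F := by
  induction hn : w.length using Nat.strong_induction_on generalizing u w with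
  | _ n ih =>
  by_cases hnd : (w.map Dart.edge).Nodup
  · exact ⟨u, _, hu, aiPath_of_isWalk h, hnd⟩
  obtain ⟨u', hu', w', hw', hlt⟩ := exists_shorter_closed_walk h hnd
  exact ih _ (hn ▸ hlt) hw' hu' rfl

theorem hasAICycle_of_isWalk_of_not_nodup {ν ν' : VPt} {w : List Dart} (h : IsWalk F ν ν' w)
    (hnd : ¬ (w.map Dart.edge).Nodup) : HasAICycle F := by
  obtain ⟨u, hu, w', hw', -⟩ := exists_shorter_closed_walk h hnd
  exact hasAICycle_of_isWalk_self hw' hu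

lemma not_nodup_of_isWalk_of_edge_eq {ν : VPt} {w : List Dart} (h : IsWalk F ν ν w)
    (hν : ∀ u, ν ≠ .ver u) (hedge : ∀ a ∈ w.head?, ∀ b ∈ w.getLast?, a.edge = b.edge) :
    ¬ (w.map Dart.edge).Nodup := by
  rcases w with _ | ⟨a, r⟩
  · exact absurd rfl h.ne_nil
  rcases r.eq_nil_or_concat with rfl | ⟨r, b, rfl⟩
  · obtain ⟨u, hu⟩ := Dart.exists_ver_of_tgt_eq_src (a := a) (b := a) (by simpa using h.last_tgt)
      (by simpa using h.head_src) rfl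
    exact absurd hu (hν u)
  · have hab := hedge a rfl b
      (by rw [List.concat_eq_append, ← List.cons_append, List.getLast?_concat]; rfl)
    simp [hab]

end Cycles

section Morphisms

def VPt.bind (ν : VPt) (φ : ℕ → VPt) : VPt :=
  match ν with
  | .ver v => φ v
  | .top => .top
  | .bot => .bot

variable {F G : PreFlow}

theorem IsWalk.flatMap {φ : ℕ → VPt} {expand : Dart → List Dart} {P : Dart → Prop}
    (hexpand : ∀ d, P d → d.edge ∈ F.E →
      IsWalk G ((d.src F).bind φ) ((d.tgt F).bind φ) (expand d))
    (hlink : ∀ d d', P d → P d' → d.edge ∈ F.E → d'.edge ∈ F.E → Dart.Linked F d d' →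
      ∀ a ∈ (expand d).getLast?, ∀ b ∈ (expand d').head?, Dart.Linked G a b) :
    ∀ {ν ν' : VPt} {w : List Dart}, IsWalk F ν ν' w → (∀ d ∈ w, P d) →
      IsWalk G (ν.bind φ) (ν'.bind φ) (w.flatMap expand)
  | _, _, [], h, _ => absurd rfl h.ne_nil
  | ν, ν', [d], h, hP => by
    obtain ⟨hE, -, hs, ht⟩ := h
    simp only [List.head?_cons, List.getLast?_singleton, Option.map_some, Option.some.injEq]
      at hs ht
    simpa [← hs, ← ht] using hexpand d (hP d (by simp)) (hE d (by simp))
  | ν, ν', d :: d' :: w, h, hP => by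
    obtain ⟨hE, hc, hs, ht⟩ := h
    rw [List.isChain_cons_cons] at hc
    have hd := hexpand d (hP d (by simp)) (hE d (by simp))
    have hrest : IsWalk F (d'.src F) ν' (d' :: w) :=
      ⟨fun x hx => hE x (by simp [hx]), hc.2, rfl, by simpa using ht⟩
    have := (hd.append (IsWalk.flatMap hexpand hlink hrest fun x hx => hP x (by simp [hx]))
      fun a ha b hb => hlink d d' (hP d (by simp)) (hP d' (by simp)) (hE d (by simp))
        (hE d' (by simp)) hc.1 a ha b ?_)
    · simp only [List.head?_cons, Option.map_some, Option.some.injEq] at hs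
      simpa [← hs] using this
    · have hne := (hexpand d' (hP d' (by simp)) (hE d' (by simp))).ne_nil
      simpa [List.head?_append_of_ne_nil _ hne] using hb

variable (I : FlowIso F G)

def FlowIso.mapDart (d : Dart) : Dart := ⟨I.emap d.edge, d.down⟩

lemma FlowIso.src_mapDart {d : Dart} (hd : d.edge ∈ F.E) :
    (I.mapDart d).src G = (d.src F).bind (VPt.ver ∘ I.vmap) := by
  rcases d with ⟨e, _ | _⟩ <;>
    simp only [FlowIso.mapDart, Dart.src, I.upc e hd, I.loc e hd] <;>
    cases F.lo e <;> cases F.up e <;> rfl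

lemma FlowIso.tgt_mapDart {d : Dart} (hd : d.edge ∈ F.E) :
    (I.mapDart d).tgt G = (d.tgt F).bind (VPt.ver ∘ I.vmap) :=
  I.src_mapDart (d := d.rev) hd

lemma FlowIso.linked_mapDart {d d' : Dart} (hd : d.edge ∈ F.E) (hd' : d'.edge ∈ F.E)
    (h : Dart.Linked F d d') : Dart.Linked G (I.mapDart d) (I.mapDart d') := by
  obtain ⟨v, hv, ht, hs, hturn⟩ := h
  refine ⟨I.vmap v, I.vbij.mapsTo hv, by simp [I.tgt_mapDart hd, ht, VPt.bind],
    by simp [I.src_mapDart hd', hs, VPt.bind], ?_⟩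
  simp only [FlowIso.mapDart, I.lab v hv]
  exact hturn.imp_right fun h => ⟨h.1, fun he => h.2 (I.ebij.injOn hd hd' he)⟩

lemma IsWalk.mapDart {ν ν' : VPt} {w : List Dart} (h : IsWalk F ν ν' w) :
    IsWalk G (ν.bind (VPt.ver ∘ I.vmap)) (ν'.bind (VPt.ver ∘ I.vmap)) (w.map I.mapDart) := by
  have := IsWalk.flatMap (P := fun _ => True) (expand := fun d => [I.mapDart d])
    (fun d _ hd => by
      simpa [I.src_mapDart hd, I.tgt_mapDart hd] using
        IsWalk.singleton (F := G) (d := I.mapDart d) (I.ebij.mapsTo hd))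
    (fun d d' _ _ hd hd' hl a ha b hb => by
      simp only [List.getLast?_singleton, List.head?_cons, Option.mem_def, Option.some.injEq]
        at ha hb
      exact ha ▸ hb ▸ I.linked_mapDart hd hd' hl) h (fun _ _ => trivial)
  rwa [show (fun d => [I.mapDart d]) = pure ∘ I.mapDart from rfl, List.flatMap_pure_eq_map] at this

end Morphisms

section SimpleEdgeElimination

structure SimpleEdgeRedex (B : PreFlow) (vi vc e0 e2 e3 : ℕ) : Prop where
  vi_mem : vi ∈ B.V
  vc_mem : vc ∈ B.V
  η_vi : B.η vi = .aiDown
  η_vc : B.η vc = .aiUp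
  e0_mem : e0 ∈ B.E
  e2_mem : e2 ∈ B.E
  e3_mem : e3 ∈ B.E
  e0_ne_e2 : e0 ≠ e2
  e0_ne_e3 : e0 ≠ e3
  up_e0 : B.up e0 = some vi
  lo_e0 : B.lo e0 = some vc
  up_e2 : B.up e2 = some vi
  lo_e3 : B.lo e3 = some vc

/-- The name in `seFlow` of the copy of the edge `y` in the hat (`t = 0`) or tilde (`t = 1`) copy;
the tilde copy of `e3` is the glued edge `Nat.pair 0 e2`. -/
def seCopyEdge (e2 e3 t y : ℕ) : ℕ :=
  if t = 0 then Nat.pair 0 y else if y = e3 then Nat.pair 0 e2 else Nat.pair 1 y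

/-- The edge of `B` whose upper end a copy edge inherits: `e3` for the glued edge. -/
def seUpperEdge (e2 e3 x : ℕ) : ℕ := if x = Nat.pair 0 e2 then e3 else x.unpair.2

def seSrcEdge (e2 e3 : ℕ) (d : Dart) : ℕ :=
  if d.down then seUpperEdge e2 e3 d.edge else d.edge.unpair.2

/-- The weakening `Nat.pair 2 0` and the coweakening `Nat.pair 2 1` hang on copies of `e2` and
`e3`, so they are sent to `vi` and `vc`; the new cocontractions and contractions go to `⊤`, `⊥`. -/
def seVertexProj (vi vc x : ℕ) : VPt :=
  if x.unpair.1 = 2 then .ver (if x.unpair.2 = 0 then vi else vc)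
  else if x.unpair.1 = 3 then .top
  else if x.unpair.1 = 4 then .bot
  else .ver x.unpair.2

/-- The glued edge, from the upper end of `e3` to the lower end of `e2`, is expanded into the
ai-path `e3, e0, e2` through the cointeraction and the interaction. -/
def seExpand (e0 e2 e3 : ℕ) (d : Dart) : List Dart :=
  if d.edge = Nat.pair 0 e2 then
    if d.down then [⟨e3, true⟩, ⟨e0, false⟩, ⟨e2, true⟩] else [⟨e2, false⟩, ⟨e0, true⟩, ⟨e3, false⟩]
  else [⟨d.edge.unpair.2, d.down⟩]

variable {B : PreFlow} {vi vc e0 e2 e3 : ℕ}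

lemma seFlow_copy_cases {x : ℕ} (hx : (seFlow B vi vc e0 e2 e3).IsInner x) :
    (∃ y ∈ B.E, y ≠ e2 ∧ x = Nat.pair 0 y) ∨ x = Nat.pair 0 e2 ∨
      (∃ y ∈ B.E, y ≠ e3 ∧ x = Nat.pair 1 y) := by
  obtain ⟨hx, hup, hlo⟩ := hx
  simp only [seFlow, Finset.mem_union, Finset.mem_image, Finset.mem_erase, Finset.mem_filter] at hx
  rcases hx with ((⟨y, ⟨-, hy⟩, rfl⟩ | ⟨y, ⟨-, hy⟩, rfl⟩) | ⟨y, -, rfl⟩) | ⟨y, -, rfl⟩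
  · by_cases hy2 : y = e2
    · exact Or.inr (Or.inl (hy2 ▸ rfl))
    · exact Or.inl ⟨y, hy, hy2, rfl⟩
  · by_cases hy3 : y = e3
    · simp [hy3]
    · simp only [hy3, if_false]
      exact Or.inr (Or.inr ⟨y, hy, hy3, rfl⟩)
  · simp [seFlow] at hup
  · simp [seFlow] at hlo

lemma seFlow_up_copy {x : ℕ} (hx : (seFlow B vi vc e0 e2 e3).IsInner x) :
    ∃ t ≤ 1, x = seCopyEdge e2 e3 t (seUpperEdge e2 e3 x) ∧
      ((seFlow B vi vc e0 e2 e3).up x =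
          some ((B.up (seUpperEdge e2 e3 x)).elim (Nat.pair 3 (seUpperEdge e2 e3 x)) (Nat.pair t)) ∨
        (seUpperEdge e2 e3 x = e2 ∧ (seFlow B vi vc e0 e2 e3).up x = some (Nat.pair 2 0))) := by
  rcases seFlow_copy_cases hx with ⟨y, -, hy2, rfl⟩ | rfl | ⟨y, -, hy3, rfl⟩
  · refine ⟨0, by omega, by simp [seCopyEdge, seUpperEdge, hy2], Or.inl ?_⟩
    cases h : B.up y <;> simp [seFlow, seUpperEdge, hy2, h]
  · refine ⟨1, le_rfl, by simp [seCopyEdge, seUpperEdge], Or.inl ?_⟩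
    cases h : B.up e3 <;> simp [seFlow, seUpperEdge, h]
  · by_cases hy2 : y = e2
    · subst hy2
      refine ⟨1, le_rfl, by simp [seCopyEdge, seUpperEdge, hy3], Or.inr ?_⟩
      simp [seFlow, seUpperEdge]
    · refine ⟨1, le_rfl, by simp [seCopyEdge, seUpperEdge, hy3], Or.inl ?_⟩
      cases h : B.up y <;> simp [seFlow, seUpperEdge, hy2, h]

lemma seFlow_lo_copy {x : ℕ} (hx : (seFlow B vi vc e0 e2 e3).IsInner x) :
    ∃ t ≤ 1, x = seCopyEdge e2 e3 t x.unpair.2 ∧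
      ((seFlow B vi vc e0 e2 e3).lo x =
          some ((B.lo x.unpair.2).elim (Nat.pair 4 x.unpair.2) (Nat.pair t)) ∨
        (x.unpair.2 = e3 ∧ (seFlow B vi vc e0 e2 e3).lo x = some (Nat.pair 2 1))) := by
  rcases seFlow_copy_cases hx with ⟨y, -, hy2, rfl⟩ | rfl | ⟨y, -, hy3, rfl⟩
  · refine ⟨0, by omega, by simp [seCopyEdge], ?_⟩
    by_cases hy3 : y = e3
    · subst hy3; simp [seFlow, hy2]
    · left; cases h : B.lo y <;> simp [seFlow, hy2, hy3, h]
  · refine ⟨0, by omega, by simp [seCopyEdge], Or.inl ?_⟩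
    cases h : B.lo e2 <;> simp [seFlow, h]
  · refine ⟨1, le_rfl, by simp [seCopyEdge, hy3], Or.inl ?_⟩
    cases h : B.lo y <;> simp [seFlow, h]

lemma seFlow_edge_eq_seCopyEdge {d : Dart} (hx : (seFlow B vi vc e0 e2 e3).IsInner d.edge)
    {v : ℕ} (hv : d.src (seFlow B vi vc e0 e2 e3) = .ver v) (ht : v.unpair.1 ≤ 1) :
    d.edge = seCopyEdge e2 e3 v.unpair.1 (seSrcEdge e2 e3 d) := by
  rcases d with ⟨x, _ | _⟩
  · obtain ⟨t, -, hxt, h | ⟨-, h⟩⟩ := seFlow_lo_copy hx <;>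
      simp only [Dart.src, h, Bool.false_eq_true, if_false, Option.elim_some, VPt.ver.injEq]
        at hv <;>
      subst hv
    · cases hB : B.lo x.unpair.2 <;> simp only [hB, Option.elim, Nat.unpair_pair] at ht ⊢
      · omega
      · exact hxt
    · simp at ht
  · obtain ⟨t, -, hxt, h | ⟨-, h⟩⟩ := seFlow_up_copy hx <;>
      simp only [Dart.src, h, if_true, Option.elim_some, VPt.ver.injEq] at hv <;>
      subst hv
    · cases hB : B.up (seUpperEdge e2 e3 x) <;>
        simp only [hB, Option.elim, Nat.unpair_pair] at ht ⊢
      · omega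
      · exact hxt
    · simp at ht

lemma seSrcEdge_eq_of_src {d : Dart} (hx : (seFlow B vi vc e0 e2 e3).IsInner d.edge) {v : ℕ}
    (hv : d.src (seFlow B vi vc e0 e2 e3) = .ver v) (ht : 3 ≤ v.unpair.1) :
    seSrcEdge e2 e3 d = v.unpair.2 := by
  rcases d with ⟨x, _ | _⟩
  · obtain ⟨t, htl, -, h | ⟨-, h⟩⟩ := seFlow_lo_copy hx <;>
      simp only [Dart.src, h, Bool.false_eq_true, if_false, Option.elim_some, VPt.ver.injEq]
        at hv <;>
      subst hv
    · cases hB : B.lo x.unpair.2 <;> simp only [hB, Option.elim, Nat.unpair_pair] at ht ⊢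
      · simp [seSrcEdge]
      · omega
    · simp at ht
  · obtain ⟨t, htl, -, h | ⟨-, h⟩⟩ := seFlow_up_copy hx <;>
      simp only [Dart.src, h, if_true, Option.elim_some, VPt.ver.injEq] at hv <;>
      subst hv
    · cases hB : B.up (seUpperEdge e2 e3 x) <;>
        simp only [hB, Option.elim, Nat.unpair_pair] at ht ⊢
      · simp [seSrcEdge]
      · omega
    · simp at ht

lemma mem_seFlow_V {v : ℕ} (hv : v ∈ (seFlow B vi vc e0 e2 e3).V) :
    (v.unpair.1 ≤ 1 ∧ v.unpair.2 ∈ B.V) ∨ v = Nat.pair 2 0 ∨ v = Nat.pair 2 1 ∨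
      v.unpair.1 = 3 ∨ v.unpair.1 = 4 := by
  simp only [seFlow, Finset.mem_union, Finset.mem_image, Finset.mem_erase, Finset.mem_insert,
    Finset.mem_singleton] at hv
  rcases hv with ((((⟨u, ⟨-, -, hu⟩, rfl⟩ | ⟨u, ⟨-, -, hu⟩, rfl⟩) | h2) | ⟨y, -, rfl⟩) |
    ⟨y, -, rfl⟩)
  · exact Or.inl ⟨by simp, by simpa⟩
  · exact Or.inl ⟨by simp, by simpa⟩
  · tauto
  · simp
  · simp

lemma seFlow_η_of_ai {v : ℕ} (hv : v ∈ (seFlow B vi vc e0 e2 e3).V)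
    (hai : (seFlow B vi vc e0 e2 e3).η v = .aiDown ∨ (seFlow B vi vc e0 e2 e3).η v = .aiUp) :
    v.unpair.1 ≤ 1 ∧ v.unpair.2 ∈ B.V ∧ (seFlow B vi vc e0 e2 e3).η v = B.η v.unpair.2 := by
  rcases mem_seFlow_V hv with ⟨ht, hu⟩ | rfl | rfl | ht | ht
  · have : v.unpair.1 ≠ 2 ∧ v.unpair.1 ≠ 3 ∧ v.unpair.1 ≠ 4 := by omega
    exact ⟨ht, hu, by simp [seFlow, this]⟩
  · simp [seFlow] at hai
  · simp [seFlow] at hai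
  · simp [seFlow, ht] at hai
  · simp [seFlow, ht] at hai

lemma seVertexProj_of_le_one {v : ℕ} (hv : v.unpair.1 ≤ 1) :
    seVertexProj vi vc v = .ver v.unpair.2 := by
  have : v.unpair.1 ≠ 2 ∧ v.unpair.1 ≠ 3 ∧ v.unpair.1 ≠ 4 := by omega
  simp [seVertexProj, this]

lemma three_le_of_seVertexProj_ne_ver {v : ℕ} (hv : ∀ u, seVertexProj vi vc v ≠ .ver u) :
    3 ≤ v.unpair.1 := by
  by_contra h
  by_cases h2 : v.unpair.1 = 2
  · exact hv (if v.unpair.2 = 0 then vi else vc) (by simp [seVertexProj, h2])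
  · exact hv _ (seVertexProj_of_le_one (by omega))

lemma seExpand_head? (d : Dart) :
    (seExpand e0 e2 e3 d).head? = some ⟨seSrcEdge e2 e3 d, d.down⟩ := by
  rcases d with ⟨x, _ | _⟩ <;> by_cases hx : x = Nat.pair 0 e2 <;>
    simp [seExpand, seSrcEdge, seUpperEdge, hx]

lemma seExpand_getLast? (d : Dart) :
    (seExpand e0 e2 e3 d).getLast? = some ⟨seSrcEdge e2 e3 d.rev, d.down⟩ := by
  rcases d with ⟨x, _ | _⟩ <;> by_cases hx : x = Nat.pair 0 e2 <;>
    simp [seExpand, seSrcEdge, seUpperEdge, Dart.rev, hx]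

namespace SimpleEdgeRedex

lemma src_bind_seVertexProj (R : SimpleEdgeRedex B vi vc e0 e2 e3) {d : Dart}
    (hx : (seFlow B vi vc e0 e2 e3).IsInner d.edge) :
    (d.src (seFlow B vi vc e0 e2 e3)).bind (seVertexProj vi vc) =
      Dart.src B ⟨seSrcEdge e2 e3 d, d.down⟩ := by
  rcases d with ⟨x, _ | _⟩
  · obtain ⟨t, ht, -, h | ⟨hω, h⟩⟩ := seFlow_lo_copy hx
    · have : t ≠ 2 ∧ t ≠ 3 ∧ t ≠ 4 := by omega
      cases hB : B.lo x.unpair.2 <;>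
        simp [Dart.src, seSrcEdge, h, hB, VPt.bind, seVertexProj, this]
    · simp [Dart.src, seSrcEdge, h, hω, R.lo_e3, VPt.bind, seVertexProj]
  · obtain ⟨t, ht, -, h | ⟨hω, h⟩⟩ := seFlow_up_copy hx
    · have : t ≠ 2 ∧ t ≠ 3 ∧ t ≠ 4 := by omega
      cases hB : B.up (seUpperEdge e2 e3 x) <;>
        simp [Dart.src, seSrcEdge, h, hB, VPt.bind, seVertexProj, this]
    · simp [Dart.src, seSrcEdge, h, hω, R.up_e2, VPt.bind, seVertexProj]

lemma mem_of_seVertexProj_eq_ver (R : SimpleEdgeRedex B vi vc e0 e2 e3) {v u : ℕ}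
    (hv : v ∈ (seFlow B vi vc e0 e2 e3).V)
    (hu : seVertexProj vi vc v = .ver u) : u ∈ B.V := by
  rcases mem_seFlow_V hv with ⟨ht, hB⟩ | rfl | rfl | ht | ht
  · rw [seVertexProj_of_le_one ht, VPt.ver.injEq] at hu
    exact hu ▸ hB
  · simp [seVertexProj] at hu; exact hu ▸ R.vi_mem
  · simp [seVertexProj] at hu; exact hu ▸ R.vc_mem
  · simp [seVertexProj, ht] at hu
  · simp [seVertexProj, ht] at hu

lemma isWalk_glued (R : SimpleEdgeRedex B vi vc e0 e2 e3) :
    IsWalk B (Dart.src B ⟨e3, true⟩) (Dart.tgt B ⟨e2, true⟩)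
      [⟨e3, true⟩, ⟨e0, false⟩, ⟨e2, true⟩] := by
  refine ⟨by simp [R.e0_mem, R.e2_mem, R.e3_mem], ?_, rfl, rfl⟩
  simp only [List.isChain_cons_cons, List.isChain_singleton, and_true]
  exact ⟨⟨vc, R.vc_mem, by simp [Dart.tgt, Dart.src, Dart.rev, R.lo_e3],
      by simp [Dart.src, R.lo_e0], Or.inr ⟨Or.inr R.η_vc, Ne.symm R.e0_ne_e3⟩⟩,
    ⟨vi, R.vi_mem, by simp [Dart.tgt, Dart.src, Dart.rev, R.up_e0],
      by simp [Dart.src, R.up_e2], Or.inr ⟨Or.inl R.η_vi, R.e0_ne_e2⟩⟩⟩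

lemma isWalk_seExpand (R : SimpleEdgeRedex B vi vc e0 e2 e3) {d : Dart}
    (hx : (seFlow B vi vc e0 e2 e3).IsInner d.edge) :
    IsWalk B (Dart.src B ⟨seSrcEdge e2 e3 d, d.down⟩) (Dart.tgt B ⟨seSrcEdge e2 e3 d.rev, d.down⟩)
      (seExpand e0 e2 e3 d) := by
  rcases d with ⟨x, down⟩
  by_cases hglued : x = Nat.pair 0 e2
  · subst hglued
    cases down
    · simpa [seExpand, seSrcEdge, seUpperEdge, Dart.rev, Dart.tgt] using R.isWalk_glued.reverse
    · simpa [seExpand, seSrcEdge, seUpperEdge, Dart.rev] using R.isWalk_glued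
  · have hy : x.unpair.2 ∈ B.E := by
      rcases seFlow_copy_cases hx with ⟨y, hy, -, rfl⟩ | rfl | ⟨y, hy, -, rfl⟩
      · simpa
      · exact absurd rfl hglued
      · simpa
    simpa [seExpand, seSrcEdge, seUpperEdge, hglued, Dart.rev, Dart.tgt] using
      IsWalk.singleton (F := B) (d := ⟨x.unpair.2, down⟩) hy

/-- A walk can turn only at a copy of a (co)interaction of `B`, and distinct copy edges meeting at
a copy of a vertex come from distinct edges of `B`. -/
lemma linked_seExpand (R : SimpleEdgeRedex B vi vc e0 e2 e3) {d d' : Dart}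
    (hx : (seFlow B vi vc e0 e2 e3).IsInner d.edge)
    (hx' : (seFlow B vi vc e0 e2 e3).IsInner d'.edge)
    (h : Dart.Linked (seFlow B vi vc e0 e2 e3) d d') :
    ∀ a ∈ (seExpand e0 e2 e3 d).getLast?, ∀ b ∈ (seExpand e0 e2 e3 d').head?,
      Dart.Linked B a b := by
  intro a ha b hb
  rw [seExpand_getLast?, Option.mem_def, Option.some_inj] at ha
  rw [seExpand_head?, Option.mem_def, Option.some_inj] at hb
  subst ha hb
  obtain ⟨v, hv, ht, hs, hturn⟩ := h
  have hta : Dart.tgt B ⟨seSrcEdge e2 e3 d.rev, d.down⟩ = seVertexProj vi vc v := by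
    have := R.src_bind_seVertexProj (d := d.rev) hx
    rw [Dart.src_rev, ht] at this
    exact this.symm
  have hsb : Dart.src B ⟨seSrcEdge e2 e3 d', d'.down⟩ = seVertexProj vi vc v := by
    have := R.src_bind_seVertexProj hx'
    rw [hs] at this
    exact this.symm
  rcases hturn with hdown | ⟨hai, hne⟩
  · obtain ⟨u, hu⟩ := Dart.exists_ver_of_tgt_eq_src hta hsb hdown
    exact ⟨u, R.mem_of_seVertexProj_eq_ver hv hu, hta.trans hu, hsb.trans hu, Or.inl hdown⟩
  · obtain ⟨ht1, hu, hη⟩ := seFlow_η_of_ai hv hai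
    rw [seVertexProj_of_le_one ht1] at hta hsb
    refine ⟨_, hu, hta, hsb, Or.inr ⟨hη ▸ hai, fun heq => hne ?_⟩⟩
    have h₁ : d.edge = _ := seFlow_edge_eq_seCopyEdge (d := d.rev) hx ht ht1
    have h₂ : d'.edge = _ := seFlow_edge_eq_seCopyEdge hx' hs ht1
    rw [h₁, h₂]
    exact congrArg _ heq

lemma isWalk_flatMap_seExpand (R : SimpleEdgeRedex B vi vc e0 e2 e3) {x x' : ℕ} {w : List Dart}
    (hw : IsWalk (seFlow B vi vc e0 e2 e3) (.ver x) (.ver x') w) :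
    IsWalk B (seVertexProj vi vc x) (seVertexProj vi vc x') (w.flatMap (seExpand e0 e2 e3)) :=
  IsWalk.flatMap (φ := seVertexProj vi vc)
    (P := fun d => (seFlow B vi vc e0 e2 e3).IsInner d.edge)
    (fun d hP _ => by
      have h₁ := R.src_bind_seVertexProj hP
      have h₂ := R.src_bind_seVertexProj (d := d.rev) hP
      rw [Dart.src_rev] at h₂
      rw [h₁, h₂]
      exact R.isWalk_seExpand hP)
    (fun _ _ hP hP' _ _ h => R.linked_seExpand hP hP' h)
    hw fun _ => hw.isInner

lemma not_nodup_flatMap_seExpand (R : SimpleEdgeRedex B vi vc e0 e2 e3) {x : ℕ} {w : List Dart}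
    (hw : IsWalk (seFlow B vi vc e0 e2 e3) (.ver x) (.ver x) w)
    (hx : ∀ u, seVertexProj vi vc x ≠ .ver u) :
    ¬ ((w.flatMap (seExpand e0 e2 e3)).map Dart.edge).Nodup := by
  refine not_nodup_of_isWalk_of_edge_eq (R.isWalk_flatMap_seExpand hw) hx ?_
  have h3 := three_le_of_seVertexProj_ne_ver hx
  intro a ha b hb
  rcases w with _ | ⟨d, w'⟩
  · exact absurd rfl hw.ne_nil
  obtain ⟨w'', d', hw''⟩ : ∃ w'' d', d :: w' = w'' ++ [d'] := by
    rcases (d :: w').eq_nil_or_concat with h | ⟨w'', d', h⟩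
    · simp at h
    · exact ⟨w'', d', by simpa using h⟩
  have hda : a = ⟨seSrcEdge e2 e3 d, d.down⟩ := by
    simpa [List.head?_append, seExpand_head?] using ha.symm
  have hdb : b = ⟨seSrcEdge e2 e3 d'.rev, d'.down⟩ := by
    rw [hw''] at hb
    simpa [List.getLast?_append, seExpand_getLast?] using hb.symm
  subst hda hdb
  have hd := hw.isInner (d := d) (by simp)
  have hd' := hw.isInner (d := d') (by rw [hw'']; simp)
  have hsrc : d.src (seFlow B vi vc e0 e2 e3) = .ver x := by simpa using hw.head_src
  have htgt : d'.tgt (seFlow B vi vc e0 e2 e3) = .ver x := by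
    have := hw.last_tgt
    rw [hw''] at this
    simpa using this
  rw [seSrcEdge_eq_of_src hd hsrc h3, seSrcEdge_eq_of_src (d := d'.rev) hd' htgt h3]

end SimpleEdgeRedex

end SimpleEdgeElimination

theorem statement_15_general (B C : PreFlow) (hcf : CycleFree B)
    (h : RedSE B C) : CycleFree C := by
  rintro ⟨v, l, hv, hl, -⟩
  obtain ⟨vi, vc, e0, e2, e3, hvi, hvc, -, hηi, hηc, he0, he2, he3, h02, h03, -,
    hu0, hl0, hu2, hl3, ⟨I⟩⟩ := h
  have R : SimpleEdgeRedex B vi vc e0 e2 e3 :=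
    ⟨hvi, hvc, hηi, hηc, he0, he2, he3, h02, h03, hu0, hl0, hu2, hl3⟩
  obtain ⟨w, -, hw⟩ := exists_isWalk_of_aiPath hl
  have hwB := R.isWalk_flatMap_seExpand (hw.mapDart I)
  cases hx : seVertexProj vi vc (I.vmap v) with
  | ver u =>
    rw [hx] at hwB
    exact hcf (hasAICycle_of_isWalk_self hwB (R.mem_of_seVertexProj_eq_ver (I.vbij.mapsTo hv) hx))
  | top | bot =>
    exact hcf (hasAICycle_of_isWalk_of_not_nodup hwB
      (R.not_nodup_flatMap_seExpand (hw.mapDart I) (by simp [hx])))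

/-- If an atomic flow `B` is cycle-free and `B →se C`,
then `C` is cycle-free. -/
theorem statement_15 (B C : PreFlow) (hB : B.IsFlow) (hcf : CycleFree B)
    (h : RedSE B C) : CycleFree C :=
  statement_15_general B C hcf h

end AF
end

section
/- For every SKS derivation from α to β, there exist formulae β′ and γ′ and SKS derivations: from α to β′ using only the rules ai↓, aw↑, ac↑ (and =), from β′ to γ′ using only the rules s, m (and =), and from γ′ to β using only the rules ai↑, aw↓, ac↓ (and =); that is, every SKS derivation can be decomposed into an up-fragment phase, a linear phase, and a down-fragment phase with the same overall premiss and conclusion. -/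
set_option linter.unusedVariables false

/-!
Derivations are sound for the Boolean semantics, so it suffices to decompose some derivation of
an arbitrary valid implication `α → β`. Proof search in the sequent `ᾱ, β`, with `ai↓` at the
axioms, switches splitting conjunctions and medials merging the two derivations that result,
gives `t ⟹ X` in the up fragment and `X ⟹ [Y ∨ Z]` in the linear one, where `Y` and `Z` are
precursors of `ᾱ` and `β`: they become `ᾱ` and `β` by `aw↓` and `ac↓` alone. Then `Y` is cut
against `α`: by induction on `Y`, the up fragment turns `α` into some `P` such that `(P ∧ Y)`
derives linearly a `Q` which the down fragment turns into `f`; switches push the cut to the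
atoms, where it is `ai↑`, and `ac↑` copies an atom wherever `Y` contracts it. Altogether
`α ⟹ (P ∧ X) ⟹ (P ∧ [Y ∨ Z]) ⟹ [(P ∧ Y) ∨ Z] ⟹ [Q ∨ Z] ⟹ Z ⟹ β`.
-/

namespace AF

open Formula

abbrev UpRules : Set RuleName :=
  {r | r = RuleName.aiDown ∨ r = RuleName.awUp ∨ r = RuleName.acUp ∨ r.isEq = true}

abbrev LinearRules : Set RuleName :=
  {r | r = RuleName.s ∨ r = RuleName.m ∨ r.isEq = true}

abbrev DownRules : Set RuleName :=
  {r | r = RuleName.aiUp ∨ r = RuleName.awDown ∨ r = RuleName.acDown ∨ r.isEq = true}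

class ContainsEqRules (S : Set RuleName) : Prop where
  mem : ∀ r : RuleName, r.isEq = true → r ∈ S

instance : ContainsEqRules UpRules := ⟨fun _ h => Or.inr (Or.inr (Or.inr h))⟩
instance : ContainsEqRules LinearRules := ⟨fun _ h => Or.inr (Or.inr h)⟩
instance : ContainsEqRules DownRules := ⟨fun _ h => Or.inr (Or.inr (Or.inr h))⟩

notation:50 φ:51 " ⟹[" S "] " ψ:51 => Derives S φ ψ

namespace Step

variable {S : Set RuleName} {φ ψ χ : Formula}

theorem of_rule {r : RuleName} (hr : r ∈ S) (h : RuleInstance r φ ψ) : Step S φ ψ :=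
  ⟨r, hr, [], φ, ψ, by cases φ <;> rfl, h, by cases φ <;> rfl⟩

theorem or_congr_left (h : Step S φ ψ) : Step S (.or φ χ) (.or ψ χ) := by
  obtain ⟨r, hr, q, γ, δ, hγ, hrule, rfl⟩ := h
  exact ⟨r, hr, false :: q, γ, δ, hγ, hrule, rfl⟩

theorem or_congr_right (h : Step S φ ψ) : Step S (.or χ φ) (.or χ ψ) := by
  obtain ⟨r, hr, q, γ, δ, hγ, hrule, rfl⟩ := h
  exact ⟨r, hr, true :: q, γ, δ, hγ, hrule, rfl⟩

theorem and_congr_left (h : Step S φ ψ) : Step S (.and φ χ) (.and ψ χ) := by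
  obtain ⟨r, hr, q, γ, δ, hγ, hrule, rfl⟩ := h
  exact ⟨r, hr, false :: q, γ, δ, hγ, hrule, rfl⟩

theorem and_congr_right (h : Step S φ ψ) : Step S (.and χ φ) (.and χ ψ) := by
  obtain ⟨r, hr, q, γ, δ, hγ, hrule, rfl⟩ := h
  exact ⟨r, hr, true :: q, γ, δ, hγ, hrule, rfl⟩

end Step

namespace Derives

variable {S : Set RuleName} {φ φ' ψ ψ' χ : Formula}

@[refl]
theorem refl (φ : Formula) : φ ⟹[S] φ := Relation.ReflTransGen.refl

theorem trans (h₁ : φ ⟹[S] ψ) (h₂ : ψ ⟹[S] χ) : φ ⟹[S] χ :=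
  Relation.ReflTransGen.trans h₁ h₂

instance : Trans (Derives S) (Derives S) (Derives S) := ⟨trans⟩

theorem of_rule {r : RuleName} (hr : r ∈ S) (h : RuleInstance r φ ψ) : φ ⟹[S] ψ :=
  Relation.ReflTransGen.single (Step.of_rule hr h)

theorem or_congr_left (h : φ ⟹[S] ψ) : φ.or χ ⟹[S] ψ.or χ :=
  Relation.ReflTransGen.lift (Formula.or · χ) (fun _ _ => Step.or_congr_left) _ _ h

theorem or_congr_right (h : φ ⟹[S] ψ) : χ.or φ ⟹[S] χ.or ψ :=
  Relation.ReflTransGen.lift (χ.or ·) (fun _ _ => Step.or_congr_right) _ _ h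

theorem and_congr_left (h : φ ⟹[S] ψ) : φ.and χ ⟹[S] ψ.and χ :=
  Relation.ReflTransGen.lift (Formula.and · χ) (fun _ _ => Step.and_congr_left) _ _ h

theorem and_congr_right (h : φ ⟹[S] ψ) : χ.and φ ⟹[S] χ.and ψ :=
  Relation.ReflTransGen.lift (χ.and ·) (fun _ _ => Step.and_congr_right) _ _ h

theorem or_congr (h₁ : φ ⟹[S] φ') (h₂ : ψ ⟹[S] ψ') : φ.or ψ ⟹[S] φ'.or ψ' :=
  h₁.or_congr_left.trans h₂.or_congr_right

theorem and_congr (h₁ : φ ⟹[S] φ') (h₂ : ψ ⟹[S] ψ') : φ.and ψ ⟹[S] φ'.and ψ' :=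
  h₁.and_congr_left.trans h₂.and_congr_right

section EqRules

variable [ContainsEqRules S]

theorem of_eqRule {r : RuleName} (hr : r.isEq = true) (h : RuleInstance r φ ψ) : φ ⟹[S] ψ :=
  of_rule (ContainsEqRules.mem r hr) h

theorem or_comm (a b : Formula) : a.or b ⟹[S] b.or a := of_eqRule rfl (.eqOrComm a b)
theorem and_comm (a b : Formula) : a.and b ⟹[S] b.and a := of_eqRule rfl (.eqAndComm a b)

theorem or_assoc (a b c : Formula) : (a.or b).or c ⟹[S] a.or (b.or c) :=
  of_eqRule rfl (.eqOrAssocL a b c)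
theorem or_assoc' (a b c : Formula) : a.or (b.or c) ⟹[S] (a.or b).or c :=
  of_eqRule rfl (.eqOrAssocR a b c)
theorem and_assoc (a b c : Formula) : (a.and b).and c ⟹[S] a.and (b.and c) :=
  of_eqRule rfl (.eqAndAssocL a b c)

theorem or_ff (a : Formula) : a.or .ff ⟹[S] a := of_eqRule rfl (.eqOrUnitDel a)
theorem to_or_ff (a : Formula) : a ⟹[S] a.or .ff := of_eqRule rfl (.eqOrUnitAdd a)
theorem and_tt (a : Formula) : a.and .tt ⟹[S] a := of_eqRule rfl (.eqAndUnitDel a)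
theorem to_and_tt (a : Formula) : a ⟹[S] a.and .tt := of_eqRule rfl (.eqAndUnitAdd a)
theorem tt_or_tt : Formula.tt.or .tt ⟹[S] .tt := of_eqRule rfl .eqTTDel
theorem to_tt_or_tt : .tt ⟹[S] Formula.tt.or .tt := of_eqRule rfl .eqTTAdd
theorem ff_and_ff : Formula.ff.and .ff ⟹[S] .ff := of_eqRule rfl .eqFFDel
theorem to_ff_and_ff : .ff ⟹[S] Formula.ff.and .ff := of_eqRule rfl .eqFFAdd

theorem ff_or (a : Formula) : Formula.ff.or a ⟹[S] a := (or_comm _ _).trans (or_ff a)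
theorem to_ff_or (a : Formula) : a ⟹[S] Formula.ff.or a := (to_or_ff a).trans (or_comm _ _)
theorem tt_and (a : Formula) : Formula.tt.and a ⟹[S] a := (and_comm _ _).trans (and_tt a)
theorem to_tt_and (a : Formula) : a ⟹[S] Formula.tt.and a := (to_and_tt a).trans (and_comm _ _)

theorem or_or_or_comm (a b c d : Formula) :
    (a.or b).or (c.or d) ⟹[S] (a.or c).or (b.or d) :=
  calc (a.or b).or (c.or d) ⟹[S] a.or (b.or (c.or d)) := or_assoc _ _ _
    _ ⟹[S] a.or ((b.or c).or d) := (or_assoc' _ _ _).or_congr_right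
    _ ⟹[S] a.or ((c.or b).or d) := (or_comm _ _).or_congr_left.or_congr_right
    _ ⟹[S] a.or (c.or (b.or d)) := (or_assoc _ _ _).or_congr_right
    _ ⟹[S] (a.or c).or (b.or d) := or_assoc' _ _ _

end EqRules

end Derives

namespace Formula

def ofBool : Bool → Formula
  | true => .tt
  | false => .ff

@[simp] theorem ofBool_true : ofBool true = .tt := rfl
@[simp] theorem ofBool_false : ofBool false = .ff := rfl

def eval (σ : ℕ → Bool) : Formula → Bool
  | .tt => true
  | .ff => false
  | .atom n b => σ n == b
  | .or a b => a.eval σ || b.eval σ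
  | .and a b => a.eval σ && b.eval σ

def evalConst (c : Bool) : Formula → Bool
  | .tt => true
  | .ff => false
  | .atom _ _ => c
  | .or a b => a.evalConst c || b.evalConst c
  | .and a b => a.evalConst c && b.evalConst c

def dual : Formula → Formula
  | .tt => .ff
  | .ff => .tt
  | .atom n b => .atom n (!b)
  | .or a b => .and a.dual b.dual
  | .and a b => .or a.dual b.dual

@[simp]
theorem dual_dual (F : Formula) : F.dual.dual = F := by
  induction F <;> simp_all [dual]

@[simp]
theorem eval_dual (σ : ℕ → Bool) (F : Formula) : F.dual.eval σ = !F.eval σ := by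
  induction F with
  | atom n b => cases σ n <;> cases b <;> simp [dual, eval]
  | _ => simp_all [dual, eval]

@[simp]
theorem evalConst_dual (c : Bool) (F : Formula) : F.dual.evalConst c = !F.evalConst (!c) := by
  induction F <;> simp_all [dual, evalConst]

end Formula

theorem RuleInstance.eval_imp {r : RuleName} {γ δ : Formula} (h : RuleInstance r γ δ)
    (σ : ℕ → Bool) (hγ : γ.eval σ = true) : δ.eval σ = true := by
  cases h with
  | aiDown n b => cases σ n <;> cases b <;> simp [eval]
  | aiUp n b => cases σ n <;> cases b <;> simp_all [eval]
  | _ => simp_all [eval] <;> tauto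

theorem eval_repl_of_imp {σ : ℕ → Bool} {γ δ : Formula}
    (himp : γ.eval σ = true → δ.eval σ = true) (φ : Formula) (q : List Bool)
    (hq : φ.sub q = some γ) (hφ : φ.eval σ = true) : (φ.repl q δ).eval σ = true := by
  induction φ generalizing q <;> rcases q with _ | ⟨_ | _, q⟩ <;>
    simp_all [sub, repl, eval] <;> first | (subst hq; simp_all [eval]) | tauto

theorem Step.eval_imp {S : Set RuleName} {φ ψ : Formula} (h : Step S φ ψ) (σ : ℕ → Bool)
    (hφ : φ.eval σ = true) : ψ.eval σ = true := by
  obtain ⟨r, -, q, γ, δ, hγ, hrule, rfl⟩ := h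
  exact eval_repl_of_imp (hrule.eval_imp σ) φ q hγ hφ

theorem Derives.eval_imp {S : Set RuleName} {φ ψ : Formula} (h : φ ⟹[S] ψ) (σ : ℕ → Bool)
    (hφ : φ.eval σ = true) : ψ.eval σ = true := by
  induction h with
  | refl => exact hφ
  | tail _ hstep ih => exact hstep.eval_imp σ ih

namespace Derives

variable {S : Set RuleName} [ContainsEqRules S]

theorem ofBool_or (a b : Bool) : (ofBool a).or (ofBool b) ⟹[S] ofBool (a || b) := by
  cases a <;> cases b
  exacts [or_ff _, ff_or _, or_ff _, tt_or_tt]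

theorem ofBool_and (a b : Bool) : (ofBool a).and (ofBool b) ⟹[S] ofBool (a && b) := by
  cases a <;> cases b
  exacts [ff_and_ff, and_tt _, tt_and _, and_tt _]

theorem ofBool_to_or (a b : Bool) : ofBool (a || b) ⟹[S] (ofBool a).or (ofBool b) := by
  cases a <;> cases b
  exacts [to_or_ff _, to_ff_or _, to_or_ff _, to_tt_or_tt]

theorem ofBool_to_and (a b : Bool) : ofBool (a && b) ⟹[S] (ofBool a).and (ofBool b) := by
  cases a <;> cases b
  exacts [to_ff_and_ff, to_and_tt _, to_tt_and _, to_and_tt _]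

end Derives

theorem Derives.coweaken_to_ofBool (F : Formula) : F ⟹[UpRules] ofBool (F.evalConst true) := by
  induction F with
  | tt | ff => rfl
  | atom n b => exact .of_rule (by simp) (.awUp n b)
  | or a b iha ihb => exact (iha.or_congr ihb).trans (ofBool_or _ _)
  | and a b iha ihb => exact (iha.and_congr ihb).trans (ofBool_and _ _)

theorem Derives.weaken_from_ofBool (F : Formula) : ofBool (F.evalConst false) ⟹[DownRules] F := by
  induction F with
  | tt | ff => rfl
  | atom n b => exact .of_rule (by simp) (.awDown n b)
  | or a b iha ihb => exact (ofBool_to_or _ _).trans (iha.or_congr ihb)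
  | and a b iha ihb => exact (ofBool_to_and _ _).trans (iha.and_congr ihb)

namespace Derives

variable {a b c d : Formula}

theorem switch_and_or_or : (a.or c).and (b.or d) ⟹[LinearRules] (a.and b).or (c.or d) :=
  calc (a.or c).and (b.or d) ⟹[LinearRules] ((a.or c).and b).or d := .of_rule (by simp) (.s _ _ _)
    _ ⟹[LinearRules] ((b.and a).or c).or d :=
      ((and_comm _ _).trans (.of_rule (by simp) (.s _ _ _))).or_congr_left
    _ ⟹[LinearRules] ((a.and b).or c).or d := (and_comm _ _).or_congr_left.or_congr_left
    _ ⟹[LinearRules] (a.and b).or (c.or d) := or_assoc _ _ _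

theorem switch_and_and_or : (a.and b).and (c.or d) ⟹[LinearRules] (a.and c).or (b.and d) :=
  calc (a.and b).and (c.or d) ⟹[LinearRules] a.and (b.and (c.or d)) := and_assoc _ _ _
    _ ⟹[LinearRules] a.and (c.or (b.and d)) :=
      ((or_comm _ _).and_congr_right.trans (.of_rule (by simp) (.s _ _ _))).trans
        (or_comm _ _) |>.and_congr_right
    _ ⟹[LinearRules] (a.and c).or (b.and d) := .of_rule (by simp) (.s _ _ _)

theorem switch_or_and_and : (a.or b).and (c.and d) ⟹[LinearRules] (a.and c).or (b.and d) :=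
  (and_comm _ _).trans <| switch_and_and_or.trans <| (and_comm _ _).or_congr (and_comm _ _)

end Derives

namespace Formula

def lowUnit (F : Formula) : Formula := ofBool (F.evalConst false)

end Formula

/-- `Y` turns into `F` by `aw↓` (a subformula grows out of the unit it evaluates to when all
atoms are false) and `ac↓` (an atom occurrence may be a disjunction of copies of itself). The side
conditions make `t` the only precursor of a formula whose constant value is `t`, so that two
precursors of the same formula have the same shape and merge by medial. -/
inductive Precursor : Formula → Formula → Prop
  | unit (F : Formula) : Precursor F.lowUnit F
  | atom (n : ℕ) (b : Bool) : Precursor (.atom n b) (.atom n b)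
  | atom_or {Y₁ Y₂ : Formula} {n : ℕ} {b : Bool} :
      Precursor Y₁ (.atom n b) → Precursor Y₂ (.atom n b) → Precursor (.or Y₁ Y₂) (.atom n b)
  | or {Y₁ Y₂ A B : Formula} : (A.or B).evalConst false = false →
      Precursor Y₁ A → Precursor Y₂ B → Precursor (.or Y₁ Y₂) (.or A B)
  | and {Y₁ Y₂ A B : Formula} : (A.and B).evalConst false = false →
      Precursor Y₁ A → Precursor Y₂ B → Precursor (.and Y₁ Y₂) (.and A B)

namespace Precursor

variable {Y Z F : Formula}

theorem eq_tt (h : Precursor Y F) (hF : F.evalConst false = true) : Y = .tt := by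
  cases h <;> simp_all [lowUnit, evalConst]

theorem derives_down (h : Precursor Y F) : Y ⟹[DownRules] F := by
  induction h with
  | unit F => exact .weaken_from_ofBool F
  | atom => rfl
  | atom_or _ _ ih₁ ih₂ =>
    exact (ih₁.or_congr ih₂).trans (.of_rule (by simp) (.acDown _ _))
  | or _ _ _ ih₁ ih₂ => exact ih₁.or_congr ih₂
  | and _ _ _ ih₁ ih₂ => exact ih₁.and_congr ih₂

theorem lowUnit_or {S : Set RuleName} [ContainsEqRules S] (h : Precursor Y F) :
    F.lowUnit.or Y ⟹[S] Y := by
  cases hF : F.evalConst false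
  · simpa [lowUnit, hF] using Derives.ff_or Y
  · obtain rfl := h.eq_tt hF
    simpa [lowUnit, hF] using Derives.tt_or_tt

theorem merge (hY : Precursor Y F) (hZ : Precursor Z F) :
    ∃ W, Y.or Z ⟹[LinearRules] W ∧ Precursor W F := by
  induction hY generalizing Z with
  | unit F => exact ⟨Z, hZ.lowUnit_or, hZ⟩
  | atom n b => exact ⟨_, .refl _, .atom_or (.atom n b) hZ⟩
  | atom_or h₁ h₂ => exact ⟨_, .refl _, .atom_or (.atom_or h₁ h₂) hZ⟩
  | or hAB hY₁ hY₂ ih₁ ih₂ =>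
    cases hZ with
    | unit =>
      exact ⟨_, (Derives.or_comm _ _).trans (or hAB hY₁ hY₂).lowUnit_or, or hAB hY₁ hY₂⟩
    | or _ hZ₁ hZ₂ =>
      obtain ⟨W₁, hW₁, hW₁F⟩ := ih₁ hZ₁
      obtain ⟨W₂, hW₂, hW₂F⟩ := ih₂ hZ₂
      exact ⟨_, (Derives.or_or_or_comm _ _ _ _).trans (hW₁.or_congr hW₂),
        or hAB hW₁F hW₂F⟩
  | and hAB hY₁ hY₂ ih₁ ih₂ =>
    cases hZ with
    | unit =>
      exact ⟨_, (Derives.or_comm _ _).trans (and hAB hY₁ hY₂).lowUnit_or, and hAB hY₁ hY₂⟩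
    | and _ hZ₁ hZ₂ =>
      obtain ⟨W₁, hW₁, hW₁F⟩ := ih₁ hZ₁
      obtain ⟨W₂, hW₂, hW₂F⟩ := ih₂ hZ₂
      exact ⟨_, (Derives.of_rule (by simp) (.m _ _ _ _)).trans (hW₁.and_congr hW₂),
        and hAB hW₁F hW₂F⟩

end Precursor

def bigOr : List Formula → Formula
  | [] => .ff
  | F :: L => .or F (bigOr L)

namespace Derives

variable {S : Set RuleName} [ContainsEqRules S]

theorem bigOr_perm {L L' : List Formula} (h : L.Perm L') : bigOr L ⟹[S] bigOr L' := by
  induction h with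
  | nil => rfl
  | cons _ _ ih => exact ih.or_congr_right
  | swap =>
    exact (or_assoc' _ _ _).trans <| (or_comm _ _).or_congr_left.trans (or_assoc _ _ _)
  | trans _ _ ih₁ ih₂ => exact ih₁.trans ih₂

theorem ofBool_any_to_bigOr (L : List Formula) :
    ofBool (L.any (evalConst false)) ⟹[S] bigOr (L.map lowUnit) := by
  induction L with
  | nil => rfl
  | cons _ _ ih => exact (ofBool_to_or _ _).trans ih.or_congr_right

end Derives

namespace Precursor

variable {Y F : Formula} {L ys zs : List Formula}

theorem forall₂_lowUnit (L : List Formula) : List.Forall₂ Precursor (L.map lowUnit) L := by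
  induction L with
  | nil => exact .nil
  | cons F L ih => exact .cons (.unit F) ih

theorem merge_list (hY : List.Forall₂ Precursor ys L) (hZ : List.Forall₂ Precursor zs L) :
    ∃ ws, (bigOr ys).or (bigOr zs) ⟹[LinearRules] bigOr ws ∧
      List.Forall₂ Precursor ws L := by
  induction hY generalizing zs with
  | nil =>
    cases hZ
    exact ⟨[], Derives.or_ff _, .nil⟩
  | cons hy _ ih =>
    obtain _ | ⟨hz, hZ⟩ := hZ
    obtain ⟨w, hw, hwF⟩ := hy.merge hz
    obtain ⟨ws, hws, hwsF⟩ := ih hZ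
    exact ⟨w :: ws, (Derives.or_or_or_comm _ _ _ _).trans (hw.or_congr hws), .cons hwF hwsF⟩

theorem exists_bigOr_of_mem (hY : Precursor Y F) (hF : F ∈ L)
    (hL : ∀ G ∈ L, G.evalConst false = false) :
    ∃ ys, Y ⟹[LinearRules] bigOr ys ∧ List.Forall₂ Precursor ys L := by
  induction L with
  | nil => simp at hF
  | cons G L ih =>
    have hL' : ∀ G ∈ L, G.evalConst false = false :=
      fun G hG => hL G (List.mem_cons_of_mem _ hG)
    rcases List.mem_cons.1 hF with rfl | hF
    · refine ⟨Y :: L.map lowUnit, ?_, .cons hY (forall₂_lowUnit L)⟩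
      have hany : L.any (evalConst false) = false := by simpa using hL'
      have hunits := Derives.ofBool_any_to_bigOr (S := LinearRules) L
      rw [hany] at hunits
      exact (Derives.to_or_ff Y).trans hunits.or_congr_right
    · obtain ⟨ys, hys, hysL⟩ := ih hF hL'
      refine ⟨G.lowUnit :: ys, ?_, .cons (.unit G) hysL⟩
      have hG : G.lowUnit = .ff := by simp [lowUnit, hL G List.mem_cons_self]
      exact hG ▸ hys.trans (Derives.to_ff_or _)

end Precursor

def SplitProvable (L : List Formula) : Prop :=
  ∃ X ys, .tt ⟹[UpRules] X ∧ X ⟹[LinearRules] bigOr ys ∧ List.Forall₂ Precursor ys L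

namespace SplitProvable

variable {A B F : Formula} {L L' : List Formula}

theorem perm (h : SplitProvable L) (hL : L.Perm L') : SplitProvable L' := by
  obtain ⟨X, ys, hX, hys, hysL⟩ := h
  obtain ⟨ys', hperm, hys'L'⟩ : Relation.Comp List.Perm (List.Forall₂ Precursor) ys L' := by
    rw [← List.forall₂_comp_perm_eq_perm_comp_forall₂]
    exact ⟨L, hysL, hL⟩
  exact ⟨X, ys', hX, hys.trans (.bigOr_perm hperm), hys'L'⟩

theorem of_mem_evalConst (hF : F ∈ L) (h : F.evalConst false = true) : SplitProvable L := by
  refine ⟨.tt, L.map lowUnit, .refl _, ?_, Precursor.forall₂_lowUnit L⟩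
  have hany : L.any (evalConst false) = true := List.any_eq_true.2 ⟨F, hF, h⟩
  simpa [hany] using Derives.ofBool_any_to_bigOr (S := LinearRules) L

theorem ff_cons (h : SplitProvable L) : SplitProvable (.ff :: L) := by
  obtain ⟨X, ys, hX, hys, hysL⟩ := h
  exact ⟨X, .ff :: ys, hX, hys.trans (.to_ff_or _), .cons (.unit .ff) hysL⟩

theorem or_cons (h : SplitProvable (A :: B :: L)) (hAB : (A.or B).evalConst false = false) :
    SplitProvable (A.or B :: L) := by
  obtain ⟨X, _, hX, hys, _ | ⟨hYA, _ | ⟨hYB, hysL⟩⟩⟩ := h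
  exact ⟨X, _, hX, hys.trans (.or_assoc' _ _ _), .cons (.or hAB hYA hYB) hysL⟩

theorem and_cons (hA : SplitProvable (A :: L)) (hB : SplitProvable (B :: L))
    (hAB : (A.and B).evalConst false = false) : SplitProvable (A.and B :: L) := by
  obtain ⟨X₁, _, hX₁, hys₁, _ | ⟨hYA, hysL₁⟩⟩ := hA
  obtain ⟨X₂, _, hX₂, hys₂, _ | ⟨hYB, hysL₂⟩⟩ := hB
  obtain ⟨ws, hws, hwsL⟩ := Precursor.merge_list hysL₁ hysL₂
  refine ⟨X₁.and X₂, _ :: ws, (Derives.to_and_tt _).trans (hX₁.and_congr hX₂), ?_,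
    .cons (.and hAB hYA hYB) hwsL⟩
  exact (hys₁.and_congr hys₂).trans (Derives.switch_and_or_or.trans hws.or_congr_right)

theorem of_complementary {n : ℕ} {b : Bool} (hL : ∀ G ∈ L, G.evalConst false = false)
    (h₁ : .atom n b ∈ L) (h₂ : .atom n (!b) ∈ L) : SplitProvable L := by
  obtain ⟨ys₁, hys₁, hysL₁⟩ := (Precursor.atom n b).exists_bigOr_of_mem h₁ hL
  obtain ⟨ys₂, hys₂, hysL₂⟩ := (Precursor.atom n (!b)).exists_bigOr_of_mem h₂ hL
  obtain ⟨ws, hws, hwsL⟩ := Precursor.merge_list hysL₁ hysL₂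
  exact ⟨_, ws, .of_rule (by simp) (.aiDown n b), (hys₁.or_congr hys₂).trans hws, hwsL⟩

end SplitProvable

namespace Formula

def nonAtomCount : Formula → ℕ
  | .atom _ _ => 0
  | .tt | .ff => 1
  | .or a b | .and a b => a.nonAtomCount + b.nonAtomCount + 1

theorem nonAtomCount_eq_zero {F : Formula} : F.nonAtomCount = 0 ↔ ∃ n b, F = .atom n b := by
  cases F <;> simp [nonAtomCount]

end Formula

def Valid (L : List Formula) : Prop := ∀ σ : ℕ → Bool, ∃ F ∈ L, F.eval σ = true

namespace Valid

variable {A B : Formula} {L L' : List Formula}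

theorem perm (h : Valid L) (hL : L.Perm L') : Valid L' := fun σ =>
  (h σ).imp fun _ ⟨hF, hσ⟩ => ⟨hL.subset hF, hσ⟩

theorem of_ff_cons (h : Valid (.ff :: L)) : Valid L := fun σ => by
  simpa [eval] using h σ

theorem of_or_cons (h : Valid (A.or B :: L)) : Valid (A :: B :: L) := fun σ => by
  simpa [eval, or_assoc] using h σ

theorem of_and_cons_left (h : Valid (A.and B :: L)) : Valid (A :: L) := fun σ => by
  have := h σ
  simp only [List.mem_cons, exists_eq_or_imp, eval, Bool.and_eq_true] at this ⊢
  exact this.imp_left And.left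

theorem of_and_cons_right (h : Valid (A.and B :: L)) : Valid (B :: L) := fun σ => by
  have := h σ
  simp only [List.mem_cons, exists_eq_or_imp, eval, Bool.and_eq_true] at this ⊢
  exact this.imp_left And.right

theorem exists_complementary (h : Valid L) (hL : ∀ F ∈ L, F.nonAtomCount = 0) :
    ∃ n b, .atom n b ∈ L ∧ .atom n (!b) ∈ L := by
  by_contra hno
  push Not at hno
  obtain ⟨F, hF, hσ⟩ := h fun n => decide (.atom n false ∈ L)
  obtain ⟨n, b, rfl⟩ := nonAtomCount_eq_zero.1 (hL F hF)
  cases b <;> simp_all [eval]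

end Valid

theorem Valid.splitProvable {L : List Formula} (hL : Valid L) : SplitProvable L := by
  by_cases hat : ∀ F ∈ L, F.nonAtomCount = 0
  · obtain ⟨n, b, h₁, h₂⟩ := hL.exists_complementary hat
    refine .of_complementary (fun G hG => ?_) h₁ h₂
    obtain ⟨m, c, rfl⟩ := nonAtomCount_eq_zero.1 (hat G hG)
    rfl
  push Not at hat
  obtain ⟨F, hF, hFpos⟩ := hat
  have hperm := List.perm_cons_erase hF
  have hsum : (L.map nonAtomCount).sum =
      F.nonAtomCount + ((L.erase F).map nonAtomCount).sum := by
    simpa using (hperm.map nonAtomCount).sum_eq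
  refine SplitProvable.perm ?_ hperm.symm
  have hvalid := hL.perm hperm
  by_cases hc : F.evalConst false = true
  · exact .of_mem_evalConst List.mem_cons_self hc
  rw [Bool.not_eq_true] at hc
  cases F with
  | tt => simp [evalConst] at hc
  | ff => exact hvalid.of_ff_cons.splitProvable.ff_cons
  | atom => simp [nonAtomCount] at hFpos
  | or A B => exact hvalid.of_or_cons.splitProvable.or_cons hc
  | and A B =>
    exact hvalid.of_and_cons_left.splitProvable.and_cons
      hvalid.of_and_cons_right.splitProvable hc
termination_by (L.map nonAtomCount).sum
decreasing_by all_goals simp_all [nonAtomCount] <;> omega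

def Cancels (P Y : Formula) : Prop := ∃ Q, P.and Y ⟹[LinearRules] Q ∧ Q ⟹[DownRules] .ff

namespace Cancels

theorem ofBool_not (c : Bool) : Cancels (ofBool (!c)) (ofBool c) :=
  ⟨.ff, by simpa using Derives.ofBool_and (S := LinearRules) (!c) c, .refl _⟩

theorem of_derives_or {P Y P₁ Y₁ P₂ Y₂ : Formula}
    (h : P.and Y ⟹[LinearRules] (P₁.and Y₁).or (P₂.and Y₂))
    (h₁ : Cancels P₁ Y₁) (h₂ : Cancels P₂ Y₂) : Cancels P Y := by
  obtain ⟨Q₁, hQ₁, hQ₁ff⟩ := h₁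
  obtain ⟨Q₂, hQ₂, hQ₂ff⟩ := h₂
  exact ⟨Q₁.or Q₂, h.trans (hQ₁.or_congr hQ₂), (hQ₁ff.or_congr hQ₂ff).trans (.or_ff _)⟩

end Cancels

theorem Precursor.exists_cancels {Y F : Formula} (h : Precursor Y F) :
    ∃ P, F.dual ⟹[UpRules] P ∧ Cancels P Y := by
  induction h with
  | unit F =>
    refine ⟨_, .coweaken_to_ofBool F.dual, ?_⟩
    simpa [lowUnit] using Cancels.ofBool_not (F.evalConst false)
  | atom n b =>
    refine ⟨.atom n (!b), .refl _, _, .refl _, .of_rule (r := .aiUp) (by simp) ?_⟩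
    simpa using RuleInstance.aiUp n (!b)
  | atom_or _ _ ih₁ ih₂ =>
    obtain ⟨P₁, hP₁, hc₁⟩ := ih₁
    obtain ⟨P₂, hP₂, hc₂⟩ := ih₂
    refine ⟨P₁.and P₂, ?_, .of_derives_or .switch_and_and_or hc₁ hc₂⟩
    exact (Derives.of_rule (by simp) (.acUp _ _)).trans (hP₁.and_congr hP₂)
  | or _ _ _ ih₁ ih₂ =>
    obtain ⟨P₁, hP₁, hc₁⟩ := ih₁
    obtain ⟨P₂, hP₂, hc₂⟩ := ih₂
    exact ⟨P₁.and P₂, hP₁.and_congr hP₂, .of_derives_or .switch_and_and_or hc₁ hc₂⟩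
  | and _ _ _ ih₁ ih₂ =>
    obtain ⟨P₁, hP₁, hc₁⟩ := ih₁
    obtain ⟨P₂, hP₂, hc₂⟩ := ih₂
    exact ⟨P₁.or P₂, hP₁.or_congr hP₂, .of_derives_or .switch_or_and_and hc₁ hc₂⟩

theorem Derives.valid_dual_cons {S : Set RuleName} {α β : Formula} (h : α ⟹[S] β) :
    Valid [α.dual, β] := fun σ => by
  by_cases hα : α.eval σ = true
  · exact ⟨β, by simp, h.eval_imp σ hα⟩
  · exact ⟨α.dual, by simp, by simpa using hα⟩

/-- Decomposition: every SKS derivation from `α` to `β`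
can be decomposed into a phase using only `ai↓`, `aw↑`, `ac↑` (and `=`),
followed by a linear phase using only `s`, `m` (and `=`), followed by a
phase using only `ai↑`, `aw↓`, `ac↓` (and `=`). -/
theorem statement_19 (α β : Formula) (h : Derives Set.univ α β) :
    ∃ β' γ' : Formula,
      Derives {r | r = RuleName.aiDown ∨ r = RuleName.awUp ∨
                   r = RuleName.acUp ∨ r.isEq = true} α β' ∧
      Derives {r | r = RuleName.s ∨ r = RuleName.m ∨ r.isEq = true} β' γ' ∧
      Derives {r | r = RuleName.aiUp ∨ r = RuleName.awDown ∨
                   r = RuleName.acDown ∨ r.isEq = true} γ' β := by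
  obtain ⟨X, ys, hX, hys, hysL⟩ := (Derives.valid_dual_cons h).splitProvable
  simp only [List.forall₂_cons_right_iff, List.forall₂_nil_right_iff] at hysL
  obtain ⟨Yα, _, hYα, ⟨Yβ, _, hYβ, rfl, rfl⟩, rfl⟩ := hysL
  obtain ⟨P, hP, Q, hQ, hQff⟩ := hYα.exists_cancels
  rw [dual_dual] at hP
  refine ⟨P.and X, Q.or Yβ, (Derives.to_and_tt α).trans (hP.and_congr hX), ?_, ?_⟩
  · calc P.and X ⟹[LinearRules] P.and (Yα.or (Yβ.or .ff)) := hys.and_congr_right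
      _ ⟹[LinearRules] P.and (Yα.or Yβ) := (Derives.or_ff _).or_congr_right.and_congr_right
      _ ⟹[LinearRules] (P.and Yα).or Yβ := .of_rule (by simp) (.s _ _ _)
      _ ⟹[LinearRules] Q.or Yβ := hQ.or_congr_left
  · calc Q.or Yβ ⟹[DownRules] Formula.ff.or Yβ := hQff.or_congr_left
      _ ⟹[DownRules] Yβ := Derives.ff_or _
      _ ⟹[DownRules] β := hYβ.derives_down

end AF
end
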